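/- arXiv:1707.02664 — 13 statements merged into one kernel-verified Lean document; each statement's English description precedes it below -/
import Mathlib

section
/- Let a > 0, let f, g : [-a,a] → ℝ be continuous, let ρ ≠ 0, and let x : [-a,a] → ℝ be a differentiable function with x(t) ≠ 0 for all t ∈ [-a,a] and x(-a) = ρ. Then x satisfies the Abel equation x'(t) = f(t)x(t)^3 + g(t)x(t)^2 for all t ∈ [-a,a] if and only if for every t ∈ [-a,a] one has ρ ∫_{-a}^t (f(s)x(s) + g(s)) ds ≠ 1 and x(t) = ρ / (1 − ρ ∫_{-a}^t (f(s)x(s) + g(s)) ds). -/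
/-!
Along a nonvanishing solution, `(1 / x)' = -x' / x² = -(f x + g)`, so the Abel equation says
exactly that `1 / x + ∫_{-a}^t (f x + g)` is constant, i.e. equal to its value `1 / ρ` at `-a`.
Solving `1 / x t = 1 / ρ - ∫_{-a}^t (f x + g)` for `x t` gives the integral equation; the
condition `ρ ∫ ≠ 1` is what keeps the right-hand side away from `1 / 0`.
-/

open Set intervalIntegral

theorem integral_hasDerivWithinAt_Icc_of_continuousOn {E : Type*} [NormedAddCommGroup E]
    [NormedSpace ℝ E] [CompleteSpace E] {a b t : ℝ} {h : ℝ → E}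
    (hc : ContinuousOn h (Icc a b)) (ht : t ∈ Icc a b) :
    HasDerivWithinAt (fun u => ∫ s in a..u, h s) (h t) (Icc a b) t := by
  have : Fact (t ∈ Icc a b) := ⟨ht⟩
  have hint : IntervalIntegrable h MeasureTheory.volume a t :=
    (hc.mono (by rw [uIcc_of_le ht.1]; exact Icc_subset_Icc le_rfl ht.2)).intervalIntegrable
  exact integral_hasDerivWithinAt_right hint
    ⟨Icc a b, self_mem_nhdsWithin, hc.aestronglyMeasurable measurableSet_Icc⟩ (hc t ht)

theorem forall_hasDerivWithinAt_eq_zero_iff {E : Type*} [NormedAddCommGroup E]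
    [NormedSpace ℝ E] {a b : ℝ} (hab : a < b) {w w' : ℝ → E}
    (hw : ∀ t ∈ Icc a b, HasDerivWithinAt w (w' t) (Icc a b) t) :
    (∀ t ∈ Icc a b, w' t = 0) ↔ ∀ t ∈ Icc a b, w t = w a := by
  constructor
  · intro hzero
    refine constant_of_has_deriv_right_zero (fun t ht => (hw t ht).continuousWithinAt)
      fun t ht => ?_
    rw [← hzero t (Ico_subset_Icc_self ht)]
    exact (hw t (Ico_subset_Icc_self ht)).mono_of_mem_nhdsWithin (Icc_mem_nhdsGE_of_mem ht)
  · intro hconst t ht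
    have hw_const : HasDerivWithinAt w 0 (Icc a b) t :=
      (hasDerivWithinAt_const t _ (w a)).congr hconst (hconst t ht)
    exact (uniqueDiffOn_Icc hab t ht).eq_deriv _ (hw t ht) hw_const

theorem ne_and_eq_div_one_sub_mul_iff_inv_eq {K : Type*} [Field K] {x ρ c : K}
    (hx : x ≠ 0) (hρ : ρ ≠ 0) :
    (ρ * c ≠ 1 ∧ x = ρ / (1 - ρ * c)) ↔ x⁻¹ = ρ⁻¹ - c := by
  have hsub : ρ⁻¹ - c = (1 - ρ * c) / ρ := by field_simp
  constructor
  · rintro ⟨-, rfl⟩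
    rw [hsub, inv_div]
  · intro hinv
    have hc : 1 - ρ * c ≠ 0 := by
      intro h0
      rw [hsub, h0, zero_div, inv_eq_zero] at hinv
      exact hx hinv
    refine ⟨fun h1 => hc (by rw [h1, sub_self]), ?_⟩
    rw [← inv_inv x, hinv, hsub, inv_div]

/-- For `a > 0`, continuous `f, g` on `[-a,a]`, `ρ ≠ 0`, and a differentiable
nonvanishing `x` on `[-a,a]` with `x (-a) = ρ`, the function `x` satisfies the Abel equation
`x' = f x³ + g x²` on `[-a,a]` iff for every `t ∈ [-a,a]` one has
`ρ ∫_{-a}^t (f x + g) ≠ 1` and `x t = ρ / (1 - ρ ∫_{-a}^t (f x + g))`. -/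
theorem abel_equiv_integral_equation
    (a ρ : ℝ) (ha : 0 < a) (f g x x' : ℝ → ℝ)
    (hf : ContinuousOn f (Set.Icc (-a) a)) (hg : ContinuousOn g (Set.Icc (-a) a))
    (hρ : ρ ≠ 0)
    (hx : ∀ t ∈ Set.Icc (-a) a, HasDerivWithinAt x (x' t) (Set.Icc (-a) a) t)
    (hx0 : ∀ t ∈ Set.Icc (-a) a, x t ≠ 0)
    (hxa : x (-a) = ρ) :
    (∀ t ∈ Set.Icc (-a) a, x' t = f t * x t ^ 3 + g t * x t ^ 2) ↔
      (∀ t ∈ Set.Icc (-a) a,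
        ρ * (∫ s in (-a)..t, (f s * x s + g s)) ≠ 1 ∧
        x t = ρ / (1 - ρ * ∫ s in (-a)..t, (f s * x s + g s))) := by
  have hxc : ContinuousOn x (Icc (-a) a) := fun t ht => (hx t ht).continuousWithinAt
  have hw : ∀ t ∈ Icc (-a) a,
      HasDerivWithinAt (fun u => (x u)⁻¹ + ∫ s in (-a)..u, (f s * x s + g s))
        (-x' t / x t ^ 2 + (f t * x t + g t)) (Icc (-a) a) t := fun t ht =>
    ((hx t ht).inv (hx0 t ht)).add
      (integral_hasDerivWithinAt_Icc_of_continuousOn ((hf.mul hxc).add hg) ht)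
  calc (∀ t ∈ Icc (-a) a, x' t = f t * x t ^ 3 + g t * x t ^ 2)
      ↔ ∀ t ∈ Icc (-a) a, -x' t / x t ^ 2 + (f t * x t + g t) = 0 :=
        forall₂_congr fun t ht => by
          rw [neg_div, neg_add_eq_zero, div_eq_iff (pow_ne_zero 2 (hx0 t ht))]
          ring_nf
    _ ↔ ∀ t ∈ Icc (-a) a, (x t)⁻¹ + ∫ s in (-a)..t, (f s * x s + g s) = ρ⁻¹ := by
        simpa only [hxa, integral_same, add_zero] using
          forall_hasDerivWithinAt_eq_zero_iff (neg_lt_self ha) hw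
    _ ↔ _ := forall₂_congr fun t ht => by
        rw [← eq_sub_iff_add_eq, ne_and_eq_div_one_sub_mul_iff_inv_eq (hx0 t ht) hρ]
end

section
/- Let a > 0, f, g : [-a,a] → ℝ continuous, M > 0, and 0 ≤ ρ < 1/(4a(FM + G)). Then for all continuous x, y : [-a,a] → ℝ with ‖x‖_∞ ≤ M and ‖y‖_∞ ≤ M, one has ‖Ω(x) − Ω(y)‖_∞ ≤ 8aρ²F‖x − y‖_∞; in particular Ω is Lipschitz continuous on the closed ball of radius M in C([-a,a]). -/
/-- The operator `Ω` associated to the Abel equation: `Ω(x)(t) = ρ / (1 - ρ ∫_{-a}^t (f x + g))`. -/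
noncomputable def Omega (a ρ : ℝ) (f g x : ℝ → ℝ) : ℝ → ℝ :=
  fun t => ρ / (1 - ρ * ∫ s in (-a)..t, (f s * x s + g s))

set_option maxHeartbeats 1000000 in
/-- With `F = max |f|`, `G = max |g|` on `[-a,a]`, `M > 0` and
`0 ≤ ρ < 1/(4a(FM+G))`, for all continuous `x, y` with sup norm at most `M` one has
`‖Ω(x) - Ω(y)‖_∞ ≤ 8aρ²F‖x - y‖_∞`. -/
theorem omega_lipschitz
    (a ρ M F G : ℝ) (ha : 0 < a) (hM : 0 < M) (f g : ℝ → ℝ)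
    (hf : ContinuousOn f (Set.Icc (-a) a)) (hg : ContinuousOn g (Set.Icc (-a) a))
    (hF : IsGreatest ((fun t => |f t|) '' Set.Icc (-a) a) F)
    (hG : IsGreatest ((fun t => |g t|) '' Set.Icc (-a) a) G)
    (hρ0 : 0 ≤ ρ) (hρ : ρ < 1 / (4 * a * (F * M + G)))
    (x y : ℝ → ℝ)
    (hx : ContinuousOn x (Set.Icc (-a) a)) (hy : ContinuousOn y (Set.Icc (-a) a))
    (hxM : ∀ t ∈ Set.Icc (-a) a, |x t| ≤ M) (hyM : ∀ t ∈ Set.Icc (-a) a, |y t| ≤ M) :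
    (⨆ t : Set.Icc (-a) a, |Omega a ρ f g x ↑t - Omega a ρ f g y ↑t|) ≤
      8 * a * ρ ^ 2 * F * ⨆ t : Set.Icc (-a) a, |x ↑t - y ↑t| := by
  have h0mem : (0:ℝ) ∈ Set.Icc (-a) a := by constructor <;> linarith
  haveI : Nonempty (Set.Icc (-a) a) := ⟨⟨0, h0mem⟩⟩
  -- nonnegativity of F, G
  obtain ⟨t0, ht0, hFt0⟩ := hF.1
  have hF0 : 0 ≤ F := hFt0 ▸ abs_nonneg _
  obtain ⟨t1, ht1, hGt1⟩ := hG.1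
  have hG0 : 0 ≤ G := hGt1 ▸ abs_nonneg _
  have hfF : ∀ s ∈ Set.Icc (-a) a, |f s| ≤ F := fun s hs => hF.2 ⟨s, hs, rfl⟩
  have hgG : ∀ s ∈ Set.Icc (-a) a, |g s| ≤ G := fun s hs => hG.2 ⟨s, hs, rfl⟩
  obtain ⟨C, hC⟩ : ∃ C, C = F * M + G := ⟨_, rfl⟩
  rw [← hC] at hρ
  have hC0 : 0 ≤ C := by rw [hC]; positivity
  have hCpos : 0 < C := by
    rcases hC0.lt_or_eq with h | h
    · exact h
    · rw [← h, mul_zero, div_zero] at hρ; linarith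
  -- key smallness
  have hsmall : ρ * (2 * a * C) < 1 / 2 := by
    have h4 : 0 < 4 * a * C := by positivity
    have := (lt_div_iff₀ h4).mp hρ
    nlinarith
  -- bounds on the integrands
  have hxb : ∀ s ∈ Set.Icc (-a) a, |f s * x s + g s| ≤ C := by
    intro s hs
    calc |f s * x s + g s| ≤ |f s| * |x s| + |g s| := by
          rw [← abs_mul]; exact abs_add_le _ _
      _ ≤ F * M + G := by
          have := hfF s hs; have := hgG s hs; have := hxM s hs
          have := abs_nonneg (f s); have := abs_nonneg (x s)
          nlinarith
      _ = C := hC.symm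
  have hyb : ∀ s ∈ Set.Icc (-a) a, |f s * y s + g s| ≤ C := by
    intro s hs
    calc |f s * y s + g s| ≤ |f s| * |y s| + |g s| := by
          rw [← abs_mul]; exact abs_add_le _ _
      _ ≤ F * M + G := by
          have := hfF s hs; have := hgG s hs; have := hyM s hs
          have := abs_nonneg (f s); have := abs_nonneg (y s)
          nlinarith
      _ = C := hC.symm
  -- integrability
  have hsub : ∀ t ∈ Set.Icc (-a) a, Set.uIcc (-a) t ⊆ Set.Icc (-a) a := by
    intro t ht
    rw [Set.uIcc_of_le ht.1]
    exact Set.Icc_subset_Icc_right ht.2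
  have hintx : ∀ t ∈ Set.Icc (-a) a,
      IntervalIntegrable (fun s => f s * x s + g s) MeasureTheory.volume (-a) t := by
    intro t ht
    exact (((hf.mul hx).add hg).mono (hsub t ht)).intervalIntegrable
  have hinty : ∀ t ∈ Set.Icc (-a) a,
      IntervalIntegrable (fun s => f s * y s + g s) MeasureTheory.volume (-a) t := by
    intro t ht
    exact (((hf.mul hy).add hg).mono (hsub t ht)).intervalIntegrable
  -- integral bound helper
  have hIb : ∀ (z : ℝ → ℝ) (B : ℝ), 0 ≤ B → (∀ s ∈ Set.Icc (-a) a, |z s| ≤ B) →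
      ∀ t ∈ Set.Icc (-a) a, |∫ s in (-a)..t, z s| ≤ 2 * a * B := by
    intro z B hB hzB t ht
    have h1 : ‖∫ s in (-a)..t, z s‖ ≤ B * |t - (-a)| := by
      apply intervalIntegral.norm_integral_le_of_norm_le_const
      intro s hs
      have : s ∈ Set.Icc (-a) a := hsub t ht (Set.uIoc_subset_uIcc hs)
      exact hzB s this
    have h2 : |t - (-a)| ≤ 2 * a := by
      rw [abs_of_nonneg (by linarith [ht.1])]
      linarith [ht.2]
    calc |∫ s in (-a)..t, z s| ≤ B * |t - (-a)| := h1
      _ ≤ 2 * a * B := by nlinarith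
  -- sup of |x - y|
  set K := ⨆ t : Set.Icc (-a) a, |x ↑t - y ↑t| with hK
  clear_value K
  have hbdd : BddAbove (Set.range fun t : Set.Icc (-a) a => |x ↑t - y ↑t|) := by
    refine ⟨2 * M, ?_⟩
    rintro _ ⟨t, rfl⟩
    calc |x ↑t - y ↑t| ≤ |x ↑t| + |y ↑t| := abs_sub _ _
      _ ≤ 2 * M := by linarith [hxM t t.2, hyM t t.2]
  have hKle : ∀ t ∈ Set.Icc (-a) a, |x t - y t| ≤ K := by
    intro t ht
    rw [hK]
    exact le_ciSup hbdd (⟨t, ht⟩ : Set.Icc (-a) a)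
  have hK0 : 0 ≤ K := le_trans (abs_nonneg _) (hKle 0 h0mem)
  -- main pointwise bound
  apply ciSup_le
  rintro ⟨t, ht⟩
  simp only [Omega]
  set Ix := ∫ s in (-a)..t, (f s * x s + g s) with hIx
  set Iy := ∫ s in (-a)..t, (f s * y s + g s) with hIy
  clear_value Ix Iy
  have hIxb : |Ix| ≤ 2 * a * C := by rw [hIx]; exact hIb _ C hC0 hxb t ht
  have hIyb : |Iy| ≤ 2 * a * C := by rw [hIy]; exact hIb _ C hC0 hyb t ht
  have hDx : 1 / 2 < 1 - ρ * Ix := by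
    have : ρ * Ix ≤ ρ * (2 * a * C) := by
      have := (abs_le.mp hIxb).2
      nlinarith
    linarith
  have hDy : 1 / 2 < 1 - ρ * Iy := by
    have : ρ * Iy ≤ ρ * (2 * a * C) := by
      have := (abs_le.mp hIyb).2
      nlinarith
    linarith
  have hDx0 : (1 - ρ * Ix) ≠ 0 := by linarith
  have hDy0 : (1 - ρ * Iy) ≠ 0 := by linarith
  -- difference of integrals
  have hdiff : Ix - Iy = ∫ s in (-a)..t, f s * (x s - y s) := by
    rw [hIx, hIy, ← intervalIntegral.integral_sub (hintx t ht) (hinty t ht)]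
    congr 1; ext s; ring
  have hdb : |Ix - Iy| ≤ 2 * a * (F * K) := by
    rw [hdiff]
    apply hIb _ (F * K) (by positivity)
    · intro s hs
      rw [abs_mul]
      have h1 := hfF s hs
      have h2 := hKle s hs
      have := abs_nonneg (f s); have := abs_nonneg (x s - y s)
      nlinarith
    · exact ht
  -- algebra
  have key : ρ / (1 - ρ * Ix) - ρ / (1 - ρ * Iy) =
      ρ ^ 2 * (Ix - Iy) / ((1 - ρ * Ix) * (1 - ρ * Iy)) := by
    field_simp
    ring
  rw [key, abs_div, abs_mul, abs_of_nonneg (by positivity : (0:ℝ) ≤ ρ ^ 2)]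
  have hden : (1:ℝ) / 4 ≤ |(1 - ρ * Ix) * (1 - ρ * Iy)| := by
    rw [abs_of_pos (by nlinarith)]
    nlinarith
  calc ρ ^ 2 * |Ix - Iy| / |(1 - ρ * Ix) * (1 - ρ * Iy)| ≤
      ρ ^ 2 * (2 * a * (F * K)) / (1 / 4) := by
        apply div_le_div₀ (by positivity) _ (by norm_num) hden
        have := sq_nonneg ρ
        nlinarith
    _ = 8 * a * ρ ^ 2 * F * K := by ring
end

section
/- Let a > 0, f, g : [-a,a] → ℝ continuous, M > 0, and 0 ≤ ρ < min{M/2, 1/(4a(FM + G))}. Then for every continuous x : [-a,a] → ℝ with ‖x‖_∞ ≤ M, the function Ω(x) satisfies ‖Ω(x)‖_∞ ≤ 2ρ < M; in particular Ω maps the closed ball B_M = {x ∈ C([-a,a]) : ‖x‖_∞ ≤ M} into itself. -/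
/-- With `F = max |f|`, `G = max |g|` on `[-a,a]`, `M > 0` and
`0 ≤ ρ < min{M/2, 1/(4a(FM+G))}`, for every continuous `x` with `‖x‖_∞ ≤ M` one has
`‖Ω(x)‖_∞ ≤ 2ρ < M`; in particular `Ω` maps the closed ball of radius `M` into itself. -/
theorem omega_maps_ball_into_itself
    (a ρ M F G : ℝ) (ha : 0 < a) (hM : 0 < M) (f g : ℝ → ℝ)
    (hf : ContinuousOn f (Set.Icc (-a) a)) (hg : ContinuousOn g (Set.Icc (-a) a))
    (hF : IsGreatest ((fun t => |f t|) '' Set.Icc (-a) a) F)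
    (hG : IsGreatest ((fun t => |g t|) '' Set.Icc (-a) a) G)
    (hρ0 : 0 ≤ ρ) (hρ : ρ < min (M / 2) (1 / (4 * a * (F * M + G))))
    (x : ℝ → ℝ) (hx : ContinuousOn x (Set.Icc (-a) a))
    (hxM : ∀ t ∈ Set.Icc (-a) a, |x t| ≤ M) :
    (⨆ t : Set.Icc (-a) a, |Omega a ρ f g x ↑t|) ≤ 2 * ρ ∧ 2 * ρ < M := by
  obtain ⟨c, hc, hFc⟩ := hF.1
  obtain ⟨c', hc', hGc⟩ := hG.1
  have hF0 : 0 ≤ F := hFc ▸ abs_nonneg _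
  have hG0 : 0 ≤ G := hGc ▸ abs_nonneg _
  have hρM : ρ < M / 2 := lt_of_lt_of_le hρ (min_le_left _ _)
  have hρ2 : ρ < 1 / (4 * a * (F * M + G)) := lt_of_lt_of_le hρ (min_le_right _ _)
  have hFG : 0 < F * M + G := by
    rcases lt_or_eq_of_le (by positivity : (0:ℝ) ≤ F * M + G) with h | h
    · exact h
    · exfalso
      rw [← h] at hρ2
      simp at hρ2
      linarith
  have h2ρM : 2 * ρ < M := by linarith
  refine ⟨?_, h2ρM⟩
  have hpos : (0:ℝ) < 4 * a * (F * M + G) := by positivity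
  have hρ4 : ρ * (4 * a * (F * M + G)) < 1 := by
    have := (lt_div_iff₀ hpos).mp hρ2
    linarith
  have hne : Nonempty (Set.Icc (-a) a) := ⟨⟨-a, by constructor <;> linarith⟩⟩
  apply ciSup_le
  rintro ⟨t, ht⟩
  have ht1 : -a ≤ t := ht.1
  have ht2 : t ≤ a := ht.2
  set I := ∫ s in (-a)..t, (f s * x s + g s) with hI
  have hint : |I| ≤ (F * M + G) * |t - (-a)| := by
    rw [hI, ← Real.norm_eq_abs]
    apply intervalIntegral.norm_integral_le_of_norm_le_const
    intro s hs
    rw [Set.uIoc_of_le ht1] at hs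
    have hs' : s ∈ Set.Icc (-a) a := ⟨le_of_lt hs.1, le_trans hs.2 ht2⟩
    have h1 : |f s| ≤ F := hF.2 ⟨s, hs', rfl⟩
    have h2 : |g s| ≤ G := hG.2 ⟨s, hs', rfl⟩
    have h3 : |x s| ≤ M := hxM s hs'
    calc ‖f s * x s + g s‖ ≤ |f s * x s| + |g s| := abs_add_le _ _
      _ = |f s| * |x s| + |g s| := by rw [abs_mul]
      _ ≤ F * M + G := by
          have : |f s| * |x s| ≤ F * M :=
            mul_le_mul h1 h3 (abs_nonneg _) hF0
          linarith
  have habs : |t - (-a)| = t + a := by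
    rw [abs_of_nonneg] <;> linarith
  have hIb : |I| ≤ (F * M + G) * (2 * a) := by
    rw [habs] at hint
    nlinarith
  have hρI : ρ * I < 1 / 2 := by
    have h1 : ρ * I ≤ ρ * |I| := by
      have := le_abs_self I
      nlinarith
    have h2 : ρ * |I| ≤ ρ * ((F * M + G) * (2 * a)) :=
      mul_le_mul_of_nonneg_left hIb hρ0
    nlinarith
  have hd : (1:ℝ)/2 < 1 - ρ * I := by linarith
  have hd0 : (0:ℝ) < 1 - ρ * I := by linarith
  have : |Omega a ρ f g x t| = ρ / (1 - ρ * I) := by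
    rw [Omega, ← hI, abs_of_nonneg (div_nonneg hρ0 (le_of_lt hd0))]
  rw [this, div_le_iff₀ hd0]
  nlinarith
end

section
/- Let a > 0, f, g : [-a,a] → ℝ continuous, M > 0, and 0 ≤ ρ < 1/(4a(FM + G)). Then for every continuous x : [-a,a] → ℝ with ‖x‖_∞ ≤ M and all t, ξ ∈ [-a,a], one has |Ω(x)(t) − Ω(x)(ξ)| ≤ 4ρ²(FM + G)|t − ξ|; in particular the family {Ω(x) : ‖x‖_∞ ≤ M} is uniformly Lipschitz, hence equicontinuous. -/
/-- With `F = max |f|`, `G = max |g|` on `[-a,a]`, `M > 0` and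
`0 ≤ ρ < 1/(4a(FM+G))`, for every continuous `x` with `‖x‖_∞ ≤ M` and all `t, ξ ∈ [-a,a]`,
`|Ω(x)(t) - Ω(x)(ξ)| ≤ 4ρ²(FM+G)|t - ξ|`; so the family `{Ω(x)}` is equicontinuous. -/
theorem omega_uniformly_lipschitz
    (a ρ M F G : ℝ) (ha : 0 < a) (hM : 0 < M) (f g : ℝ → ℝ)
    (hf : ContinuousOn f (Set.Icc (-a) a)) (hg : ContinuousOn g (Set.Icc (-a) a))
    (hF : IsGreatest ((fun t => |f t|) '' Set.Icc (-a) a) F)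
    (hG : IsGreatest ((fun t => |g t|) '' Set.Icc (-a) a) G)
    (hρ0 : 0 ≤ ρ) (hρ : ρ < 1 / (4 * a * (F * M + G)))
    (x : ℝ → ℝ) (hx : ContinuousOn x (Set.Icc (-a) a))
    (hxM : ∀ t ∈ Set.Icc (-a) a, |x t| ≤ M) :
    ∀ t ∈ Set.Icc (-a) a, ∀ ξ ∈ Set.Icc (-a) a,
      |Omega a ρ f g x t - Omega a ρ f g x ξ| ≤ 4 * ρ ^ 2 * (F * M + G) * |t - ξ| := by
  intro t ht ξ hξ
  set K := F * M + G with hKdef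
  obtain ⟨t₀, ht₀, hFt₀⟩ := hF.1
  have hF0 : 0 ≤ F := hFt₀ ▸ abs_nonneg _
  have hK : 0 < K := by
    by_contra h
    push_neg at h
    have h4 : 4 * a * K ≤ 0 := by nlinarith
    have : 1 / (4 * a * K) ≤ 0 := one_div_nonpos.mpr h4
    linarith
  have hbound : ∀ s ∈ Set.Icc (-a) a, |f s * x s + g s| ≤ K := by
    intro s hs
    have h1 : |f s| ≤ F := hF.2 ⟨s, hs, rfl⟩
    have h2 : |g s| ≤ G := hG.2 ⟨s, hs, rfl⟩
    have h3 : |x s| ≤ M := hxM s hs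
    calc |f s * x s + g s| ≤ |f s * x s| + |g s| := abs_add_le _ _
      _ = |f s| * |x s| + |g s| := by rw [abs_mul]
      _ ≤ F * M + G := add_le_add (mul_le_mul h1 h3 (abs_nonneg _) hF0) h2
  have hcont : ContinuousOn (fun s => f s * x s + g s) (Set.Icc (-a) a) := (hf.mul hx).add hg
  have hint : ∀ u ∈ Set.Icc (-a) a, ∀ v ∈ Set.Icc (-a) a,
      IntervalIntegrable (fun s => f s * x s + g s) MeasureTheory.volume u v := by
    intro u hu v hv
    exact (hcont.mono (Set.uIcc_subset_Icc hu hv)).intervalIntegrable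
  have hIbd : ∀ u ∈ Set.Icc (-a) a, ∀ v ∈ Set.Icc (-a) a,
      |∫ s in u..v, (f s * x s + g s)| ≤ K * |v - u| := by
    intro u hu v hv
    have := intervalIntegral.norm_integral_le_of_norm_le_const
      (f := fun s => f s * x s + g s) (C := K) (a := u) (b := v) ?_
    · simpa using this
    · intro s hs
      have : s ∈ Set.Icc (-a) a :=
        Set.uIcc_subset_Icc hu hv (Set.uIoc_subset_uIcc hs)
      simpa using hbound s this
  have hma : -a ∈ Set.Icc (-a) a := ⟨le_rfl, by linarith⟩
  have hD : ∀ u ∈ Set.Icc (-a) a,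
      1/2 ≤ 1 - ρ * ∫ s in (-a)..u, (f s * x s + g s) := by
    intro u hu
    have hI : |∫ s in (-a)..u, (f s * x s + g s)| ≤ K * |u - (-a)| := hIbd _ hma u hu
    have habs : |u - (-a)| ≤ 2 * a := by
      rw [abs_of_nonneg (by linarith [hu.1])]
      linarith [hu.2]
    have h1 : ρ * ∫ s in (-a)..u, (f s * x s + g s) ≤ ρ * (K * (2 * a)) := by
      apply mul_le_mul_of_nonneg_left _ hρ0
      calc (∫ s in (-a)..u, (f s * x s + g s)) ≤ |∫ s in (-a)..u, (f s * x s + g s)| :=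
            le_abs_self _
        _ ≤ K * |u - (-a)| := hI
        _ ≤ K * (2 * a) := by nlinarith
    have h4aK : 0 < 4 * a * K := by positivity
    have h2 : ρ * (4 * a * K) < 1 := (lt_div_iff₀ h4aK).mp hρ
    nlinarith
  have hDt := hD t ht
  have hDξ := hD ξ hξ
  set It := ∫ s in (-a)..t, (f s * x s + g s) with hIt
  set Iξ := ∫ s in (-a)..ξ, (f s * x s + g s) with hIξ
  have hDt0 : (1 - ρ * It) ≠ 0 := by linarith
  have hDξ0 : (1 - ρ * Iξ) ≠ 0 := by linarith
  have hdiff : It - Iξ = ∫ s in ξ..t, (f s * x s + g s) := by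
    have := intervalIntegral.integral_add_adjacent_intervals
      (hint (-a) hma ξ hξ) (hint ξ hξ t ht)
    rw [hIt, hIξ, ← this]; ring
  have hIdiff : |It - Iξ| ≤ K * |t - ξ| := by rw [hdiff]; exact hIbd ξ hξ t ht
  have key : Omega a ρ f g x t - Omega a ρ f g x ξ =
      ρ ^ 2 * (It - Iξ) / ((1 - ρ * It) * (1 - ρ * Iξ)) := by
    simp only [Omega, ← hIt, ← hIξ]
    field_simp
    ring
  rw [key, abs_div, abs_mul]
  have hprodpos : 0 < (1 - ρ * It) * (1 - ρ * Iξ) := by nlinarith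
  rw [abs_of_pos hprodpos, div_le_iff₀ hprodpos]
  have hρ2 : |ρ ^ 2| = ρ ^ 2 := abs_of_nonneg (by positivity)
  rw [hρ2]
  have habs : 0 ≤ |t - ξ| := abs_nonneg _
  have hq : 1/4 ≤ (1 - ρ * It) * (1 - ρ * Iξ) := by nlinarith
  have hc : 0 ≤ 4 * ρ ^ 2 * K * |t - ξ| := by positivity
  nlinarith [mul_le_mul_of_nonneg_left hIdiff (sq_nonneg ρ),
    mul_le_mul_of_nonneg_left hq hc]
end

section
/- Let a > 0, f, g : [-a,a] → ℝ continuous, M > 0, and 0 ≤ ρ < 1/(4a(FM + G)). Then the image Ω(B_M) of the closed ball B_M = {x ∈ C([-a,a]) : ‖x‖_∞ ≤ M} under Ω has compact closure in the space C([-a,a]) of continuous real-valued functions on [-a,a] equipped with the supremum norm; that is, the restriction of Ω to B_M is a compact operator. -/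
/-- With `F = max |f|`, `G = max |g|` on `[-a,a]`, `M > 0` and
`0 ≤ ρ < 1/(4a(FM+G))`, the image under `Ω` of the closed ball of radius `M` has compact
closure in `C([-a,a], ℝ)` with the sup norm: the restriction of `Ω` to this ball is a
compact operator. -/
theorem omega_image_relatively_compact
    (a ρ M F G : ℝ) (ha : 0 < a) (hM : 0 < M) (f g : ℝ → ℝ)
    (hf : ContinuousOn f (Set.Icc (-a) a)) (hg : ContinuousOn g (Set.Icc (-a) a))
    (hF : IsGreatest ((fun t => |f t|) '' Set.Icc (-a) a) F)
    (hG : IsGreatest ((fun t => |g t|) '' Set.Icc (-a) a) G)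
    (hρ0 : 0 ≤ ρ) (hρ : ρ < 1 / (4 * a * (F * M + G))) :
    IsCompact (closure {y : C(Set.Icc (-a) a, ℝ) |
      ∃ x : ℝ → ℝ, ContinuousOn x (Set.Icc (-a) a) ∧
        (∀ t ∈ Set.Icc (-a) a, |x t| ≤ M) ∧
        ∀ t : Set.Icc (-a) a, y t = Omega a ρ f g x ↑t}) := by
  set L : ℝ := F * M + G with hLdef
  obtain ⟨tF, htF, htFe⟩ := hF.1
  obtain ⟨tG, htG, htGe⟩ := hG.1
  have hF0 : 0 ≤ F := htFe ▸ abs_nonneg _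
  have hG0 : 0 ≤ G := htGe ▸ abs_nonneg _
  have hL0 : 0 ≤ L := add_nonneg (mul_nonneg hF0 hM.le) hG0
  have hLpos : 0 < L := by
    rcases hL0.lt_or_eq with h | h
    · exact h
    · exfalso
      rw [← h] at hρ
      simp at hρ
      linarith
  have h4aL : 0 < 4 * a * L := by positivity
  have hρL : ρ * (2 * a * L) < 1 / 2 := by
    rw [lt_div_iff₀ h4aL] at hρ; nlinarith
  set R : ℝ := 2 * ρ with hRdef
  set C : NNReal := ⟨4 * ρ ^ 2 * L, by positivity⟩ with hCdef
  have hCcoe : (C : ℝ) = 4 * ρ ^ 2 * L := rfl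
  set S := {y : C(Set.Icc (-a) a, ℝ) |
      ∃ x : ℝ → ℝ, ContinuousOn x (Set.Icc (-a) a) ∧
        (∀ t ∈ Set.Icc (-a) a, |x t| ≤ M) ∧
        ∀ t : Set.Icc (-a) a, y t = Omega a ρ f g x ↑t} with hSdef
  set K := {y : C(Set.Icc (-a) a, ℝ) | LipschitzWith C ⇑y ∧ ∀ t, |y t| ≤ R} with hKdef
  -- S ⊆ K
  have hSK : S ⊆ K := by
    rintro y ⟨x, hxc, hxM, hy⟩
    set h : ℝ → ℝ := fun s => f s * x s + g s with hhdef
    have hhc : ContinuousOn h (Set.Icc (-a) a) := (hf.mul hxc).add hg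
    have hbound : ∀ τ ∈ Set.Icc (-a) a, |h τ| ≤ L := by
      intro τ hτ
      have h1 : |f τ| ≤ F := hF.2 ⟨τ, hτ, rfl⟩
      have h2 : |g τ| ≤ G := hG.2 ⟨τ, hτ, rfl⟩
      have h3 : |x τ| ≤ M := hxM τ hτ
      have h4 : |f τ| * |x τ| ≤ F * M :=
        mul_le_mul h1 h3 (abs_nonneg _) hF0
      calc |f τ * x τ + g τ| ≤ |f τ * x τ| + |g τ| := abs_add_le _ _
        _ = |f τ| * |x τ| + |g τ| := by rw [abs_mul]
        _ ≤ F * M + G := add_le_add h4 h2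
    have hint : ∀ s ∈ Set.Icc (-a) a, ∀ t ∈ Set.Icc (-a) a,
        IntervalIntegrable h MeasureTheory.volume s t := by
      intro s hs t ht
      exact (hhc.mono (Set.uIcc_subset_Icc hs ht)).intervalIntegrable
    set u : ℝ → ℝ := fun t => ∫ s in (-a)..t, h s with hudef
    have hma : -a ∈ Set.Icc (-a) a := Set.left_mem_Icc.mpr (by linarith)
    have hud : ∀ s ∈ Set.Icc (-a) a, ∀ t ∈ Set.Icc (-a) a, |u t - u s| ≤ L * |t - s| := by
      intro s hs t ht
      have : u t - u s = ∫ τ in s..t, h τ :=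
        intervalIntegral.integral_interval_sub_left (hint _ hma _ ht) (hint _ hma _ hs)
      rw [this]
      have := intervalIntegral.norm_integral_le_of_norm_le_const
        (C := L) (f := h) (a := s) (b := t) ?_
      · simpa [Real.norm_eq_abs] using this
      · intro τ hτ
        have : τ ∈ Set.Icc (-a) a :=
          Set.uIcc_subset_Icc hs ht (Set.uIoc_subset_uIcc hτ)
        simpa [Real.norm_eq_abs] using hbound τ this
    have hu0 : ∀ t ∈ Set.Icc (-a) a, |u t| ≤ 2 * a * L := by
      intro t ht
      have hua : u (-a) = 0 := intervalIntegral.integral_same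
      have := hud _ hma _ ht
      rw [hua, sub_zero] at this
      have habs : |t - -a| ≤ 2 * a := by
        rw [abs_le]; constructor <;> [linarith [ht.1]; linarith [ht.2]]
      calc |u t| ≤ L * |t - -a| := this
        _ ≤ L * (2 * a) := by gcongr
        _ = 2 * a * L := by ring
    have hden : ∀ t ∈ Set.Icc (-a) a, 1 / 2 ≤ 1 - ρ * u t := by
      intro t ht
      have h1 : ρ * u t ≤ ρ * |u t| := by
        have := le_abs_self (u t); nlinarith
      have h2 : ρ * |u t| ≤ ρ * (2 * a * L) := by
        have := hu0 t ht; nlinarith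
      nlinarith [h1, h2, hρL]
    have hyval : ∀ t : Set.Icc (-a) a, y t = ρ / (1 - ρ * u ↑t) := fun t => hy t
    refine ⟨?_, ?_⟩
    · -- Lipschitz
      apply LipschitzWith.of_dist_le_mul
      intro t s
      rw [Real.dist_eq, Subtype.dist_eq, Real.dist_eq, hyval t, hyval s, hCcoe]
      set Dt := 1 - ρ * u ↑t with hDt
      set Ds := 1 - ρ * u ↑s with hDs
      have hDt2 : 1 / 2 ≤ Dt := hden _ t.2
      have hDs2 : 1 / 2 ≤ Ds := hden _ s.2
      have hDt0 : Dt ≠ 0 := by linarith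
      have hDs0 : Ds ≠ 0 := by linarith
      have key : ρ / Dt - ρ / Ds = ρ ^ 2 * (u ↑t - u ↑s) / (Dt * Ds) := by
        field_simp
        ring
      have hu := hud _ s.2 _ t.2
      have hDtDs : (1 : ℝ) / 4 ≤ Dt * Ds := by
        nlinarith [mul_nonneg (by linarith : (0:ℝ) ≤ Dt - 1/2) (by linarith : (0:ℝ) ≤ Ds - 1/2)]
      have hnum : |ρ ^ 2 * (u ↑t - u ↑s)| ≤ ρ ^ 2 * (L * |(↑t : ℝ) - ↑s|) := by
        rw [abs_mul, abs_of_nonneg (sq_nonneg ρ)]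
        exact mul_le_mul_of_nonneg_left hu (sq_nonneg ρ)
      have habsD : |Dt * Ds| = Dt * Ds := abs_of_pos (lt_of_lt_of_le (by norm_num) hDtDs)
      calc |ρ / Dt - ρ / Ds| = |ρ ^ 2 * (u ↑t - u ↑s)| / |Dt * Ds| := by rw [key, abs_div]
        _ ≤ (ρ ^ 2 * (L * |(↑t : ℝ) - ↑s|)) / (1 / 4) := by
            apply div_le_div₀ (by positivity) hnum (by norm_num)
            rw [habsD]; exact hDtDs
        _ = 4 * ρ ^ 2 * L * |(↑t : ℝ) - ↑s| := by ring
    · -- bound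
      intro t
      rw [hyval t]
      have hDt2 : 1 / 2 ≤ 1 - ρ * u ↑t := hden _ t.2
      have hpos : 0 < 1 - ρ * u ↑t := by linarith
      rw [abs_div, abs_of_nonneg hρ0, abs_of_pos hpos, div_le_iff₀ hpos, hRdef]
      nlinarith [mul_le_mul_of_nonneg_left hDt2 (by linarith : (0:ℝ) ≤ 2 * ρ)]
  -- K is compact
  have hKcomp : IsCompact K := by
    apply ArzelaAscoli.isCompact_of_equicontinuous
    · -- pointwise compactness
      have himg : ContinuousMap.toFun '' K =
          {u : Set.Icc (-a) a → ℝ | LipschitzWith C u ∧ ∀ t, |u t| ≤ R} := by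
        ext u
        constructor
        · rintro ⟨y, ⟨h1, h2⟩, rfl⟩; exact ⟨h1, h2⟩
        · rintro ⟨h1, h2⟩
          exact ⟨⟨u, h1.continuous⟩, ⟨h1, h2⟩, rfl⟩
      rw [himg]
      apply IsCompact.of_isClosed_subset (isCompact_univ_pi fun _ => isCompact_Icc (a := -R) (b := R))
      · have : {u : Set.Icc (-a) a → ℝ | LipschitzWith C u ∧ ∀ t, |u t| ≤ R} =
            {u | LipschitzWith C u} ∩ ⋂ t, {u | |u t| ≤ R} := by
          ext u; simp [Set.mem_iInter]
        rw [this]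
        exact (isClosed_setOf_lipschitzWith C).inter
          (isClosed_iInter fun t => isClosed_le (continuous_abs.comp (continuous_apply t))
            continuous_const)
      · rintro u ⟨_, h2⟩ t _
        exact Set.mem_Icc.mpr (abs_le.mp (h2 t))
    · -- equicontinuity
      apply Metric.equicontinuous_of_continuity_modulus (fun d => (C : ℝ) * d)
      · have : Filter.Tendsto (fun d : ℝ => (C : ℝ) * d) (nhds 0) (nhds ((C : ℝ) * 0)) :=
          (continuous_const.mul continuous_id).tendsto 0
        simpa using this
      · intro x y i
        exact i.2.1.dist_le_mul x y
  exact hKcomp.of_isClosed_subset isClosed_closure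
    (closure_minimal hSK hKcomp.isClosed)
end

section
/- Let a > 0 and let f, g : [-a,a] → ℝ be odd continuous functions. If x : [-a,a] → ℝ is a continuous even function, then Ω(x) is an even function on [-a,a], i.e., Ω(x)(−t) = Ω(x)(t) for all t ∈ [-a,a]. -/
namespace intervalIntegral

variable {E : Type*} [NormedAddCommGroup E] [NormedSpace ℝ E] {F : ℝ → E}

theorem integral_neg_self_eq_zero_of_odd {t : ℝ}
    (hodd : ∀ s ∈ Set.uIcc (-t) t, F (-s) = -F s) :
    ∫ s in (-t)..t, F s = 0 := by
  have hflip : ∫ s in (-t)..t, F (-s) = ∫ s in (-t)..t, F s := by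
    rw [integral_comp_neg, neg_neg]
  rw [integral_congr hodd, integral_neg] at hflip
  have htwice : (2 : ℝ) • ∫ s in (-t)..t, F s = 0 := by
    rw [two_smul]
    nth_rewrite 1 [← hflip]
    exact neg_add_cancel _
  simpa using htwice

/-- The two integrals differ by the integral over the symmetric interval between `t` and `-t`. -/
theorem integral_neg_upper_eq_of_odd {a t : ℝ}
    (hint : IntervalIntegrable F MeasureTheory.volume (-a) a)
    (hodd : ∀ s ∈ Set.Icc (-a) a, F (-s) = -F s) (ht : t ∈ Set.Icc (-a) a) :
    ∫ s in (-a)..(-t), F s = ∫ s in (-a)..t, F s := by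
  have hnt : -t ∈ Set.Icc (-a) a := ⟨neg_le_neg ht.2, by linarith [ht.1]⟩
  have hsub : Set.uIcc (-t) t ⊆ Set.Icc (-a) a := Set.uIcc_subset_Icc hnt ht
  rw [← sub_eq_zero, integral_interval_sub_left
      (hint.mono_set (Set.uIcc_subset_uIcc_left (Set.Icc_subset_uIcc hnt)))
      (hint.mono_set (Set.uIcc_subset_uIcc_left (Set.Icc_subset_uIcc ht))),
    integral_symm, neg_eq_zero]
  exact integral_neg_self_eq_zero_of_odd fun s hs => hodd s (hsub hs)

end intervalIntegral

theorem omega_preserves_evenness_general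
    (a ρ : ℝ) (f g : ℝ → ℝ)
    (hf : ContinuousOn f (Set.Icc (-a) a)) (hg : ContinuousOn g (Set.Icc (-a) a))
    (hfodd : ∀ t ∈ Set.Icc (-a) a, f (-t) = -f t)
    (hgodd : ∀ t ∈ Set.Icc (-a) a, g (-t) = -g t)
    (x : ℝ → ℝ) (hx : ContinuousOn x (Set.Icc (-a) a))
    (hxeven : ∀ t ∈ Set.Icc (-a) a, x (-t) = x t) :
    ∀ t ∈ Set.Icc (-a) a, Omega a ρ f g x (-t) = Omega a ρ f g x t := by
  intro t ht
  have hint : IntervalIntegrable (fun s => f s * x s + g s) MeasureTheory.volume (-a) a :=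
    ((hf.mul hx).add hg).intervalIntegrable_of_Icc (by linarith [ht.1, ht.2])
  have hodd : ∀ s ∈ Set.Icc (-a) a, f (-s) * x (-s) + g (-s) = -(f s * x s + g s) := by
    intro s hs
    rw [hfodd s hs, hxeven s hs, hgodd s hs]
    ring
  simp only [Omega, intervalIntegral.integral_neg_upper_eq_of_odd hint hodd ht]

/-- If `f, g` are odd continuous functions on `[-a,a]` and `x` is a continuous
even function on `[-a,a]`, then `Ω(x)` is even on `[-a,a]`. -/
theorem omega_preserves_evenness
    (a ρ : ℝ) (ha : 0 < a) (f g : ℝ → ℝ)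
    (hf : ContinuousOn f (Set.Icc (-a) a)) (hg : ContinuousOn g (Set.Icc (-a) a))
    (hfodd : ∀ t ∈ Set.Icc (-a) a, f (-t) = -f t)
    (hgodd : ∀ t ∈ Set.Icc (-a) a, g (-t) = -g t)
    (x : ℝ → ℝ) (hx : ContinuousOn x (Set.Icc (-a) a))
    (hxeven : ∀ t ∈ Set.Icc (-a) a, x (-t) = x t) :
    ∀ t ∈ Set.Icc (-a) a, Omega a ρ f g x (-t) = Omega a ρ f g x t :=
  omega_preserves_evenness_general a ρ f g hf hg hfodd hgodd x hx hxeven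
end

section
/- Let a > 0, let f, g : [-a,a] → ℝ be odd continuous functions, let M > 0, and let 0 ≤ ρ < min{M/2, 1/(4a(FM + G))}. Then there exists a continuous even function x : [-a,a] → ℝ with ‖x‖_∞ ≤ M such that x(t) = ρ / (1 − ρ ∫_{-a}^t (f(s)x(s) + g(s)) ds) for all t ∈ [-a,a]; in particular x is a solution of the Abel equation x'(t) = f(t)x(t)^3 + g(t)x(t)^2 with x(-a) = ρ, and it is closed, i.e., x(a) = x(-a). -/
open MeasureTheory Set Function
open scoped NNReal BoundedContinuousFunction

/-!
Truncate `x` at level `M` and extend `f`, `g` oddly beyond `[-a, a]`. Then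
`x ↦ ρ / (1 - ρ ∫_{-a}^t (f x + g))` is a self-map of the bounded continuous functions on `ℝ`:
the integral is at most `2a(FM + G) < 1 / (2ρ)`, so the denominator stays above `1/2`, and the
map is a contraction with constant `8aFρ² ≤ 4aFMρ < 1`. Because `f` and `g` are odd, it maps even
functions to even functions, so its Banach fixed point is even. The fixed point is bounded by
`2ρ ≤ M`, so the truncation has no effect on it, and differentiating the fixed point equation gives
the Abel equation. Evenness gives `x a = x (-a)`.
-/

noncomputable def symmClamp (a t : ℝ) : ℝ := max (-a) (min a t)

section SymmClamp

variable {a : ℝ}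

theorem continuous_symmClamp (a : ℝ) : Continuous (symmClamp a) := by
  unfold symmClamp; fun_prop

theorem lipschitzWith_symmClamp (a : ℝ) : LipschitzWith 1 (symmClamp a) :=
  (LipschitzWith.id.const_min a).const_max (-a)

theorem symmClamp_mem (ha : 0 ≤ a) (t : ℝ) : symmClamp a t ∈ Icc (-a) a :=
  ⟨le_max_left _ _, max_le (by linarith) (min_le_left _ _)⟩

theorem symmClamp_of_mem {t : ℝ} (ht : t ∈ Icc (-a) a) : symmClamp a t = t := by
  rw [symmClamp, min_eq_right ht.2, max_eq_right ht.1]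

theorem odd_symmClamp (ha : 0 ≤ a) : (symmClamp a).Odd := by
  intro t
  simp only [symmClamp, max_def, min_def]
  split_ifs <;> linarith

theorem continuous_comp_symmClamp (ha : 0 ≤ a) {f : ℝ → ℝ} (hf : ContinuousOn f (Icc (-a) a)) :
    Continuous (f ∘ symmClamp a) :=
  hf.comp_continuous (continuous_symmClamp a) (symmClamp_mem ha)

theorem odd_comp_symmClamp (ha : 0 ≤ a) {f : ℝ → ℝ} (hf : ∀ t ∈ Icc (-a) a, f (-t) = -f t) :
    (f ∘ symmClamp a).Odd := fun t => by
  simp only [comp_apply, odd_symmClamp ha t, hf _ (symmClamp_mem ha t)]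

end SymmClamp

section Arithmetic

variable {ρ I J : ℝ}

theorem mul_lt_one_of_lt_one_div {c : ℝ} (hc : 0 ≤ c) (hρc : ρ < 1 / c) : ρ * c < 1 := by
  rcases hc.lt_or_eq with hc | rfl
  · exact (lt_div_iff₀ hc).mp hρc
  · simp

theorem half_lt_one_sub_mul {a B : ℝ} (hρ : 0 ≤ ρ) (hI : |I| ≤ 2 * a * B)
    (hρB : ρ * (4 * a * B) < 1) : 1 / 2 < 1 - ρ * I := by
  nlinarith [mul_le_mul_of_nonneg_left ((le_abs_self I).trans hI) hρ]

theorem abs_div_one_sub_mul_le (hρ : 0 ≤ ρ) (hI : 1 / 2 < 1 - ρ * I) :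
    |ρ / (1 - ρ * I)| ≤ 2 * ρ := by
  rw [abs_div, abs_of_nonneg hρ, abs_of_pos (by linarith), div_le_iff₀ (by linarith)]
  nlinarith

theorem abs_div_one_sub_mul_sub_le (hI : 1 / 2 < 1 - ρ * I) (hJ : 1 / 2 < 1 - ρ * J) :
    |ρ / (1 - ρ * I) - ρ / (1 - ρ * J)| ≤ 4 * ρ ^ 2 * |I - J| := by
  have hI' : 1 - ρ * I ≠ 0 := by linarith
  have hJ' : 1 - ρ * J ≠ 0 := by linarith
  have hprod : 1 / 4 ≤ |(1 - ρ * I) * (1 - ρ * J)| := by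
    rw [abs_of_pos (by nlinarith)]; nlinarith
  rw [div_sub_div _ _ hI' hJ', show ρ * (1 - ρ * J) - (1 - ρ * I) * ρ = ρ ^ 2 * (I - J) by ring,
    abs_div, div_le_iff₀ (by linarith), abs_mul, abs_of_nonneg (sq_nonneg ρ)]
  nlinarith [mul_le_mul_of_nonneg_left hprod (by positivity : 0 ≤ 4 * ρ ^ 2 * |I - J|)]

end Arithmetic

section Integral

variable {φ : ℝ → ℝ}

theorem abs_intervalIntegral_le_of_abs_le {a B u : ℝ} (hφ : ∀ s, |φ s| ≤ B)
    (hu : u ∈ Icc (-a) a) : |∫ s in (-a)..u, φ s| ≤ 2 * a * B := by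
  have hB : 0 ≤ B := (abs_nonneg _).trans (hφ 0)
  calc |∫ s in (-a)..u, φ s| ≤ B * |u - -a| := by
        simpa only [Real.norm_eq_abs] using
          intervalIntegral.norm_integral_le_of_norm_le_const (a := -a) (b := u) (f := φ)
            fun s _ => hφ s
    _ ≤ B * (2 * a) := by
        gcongr
        rw [abs_le]; constructor <;> linarith [hu.1, hu.2]
    _ = 2 * a * B := by ring

theorem Function.Odd.intervalIntegral_neg_eq_zero (hφ : φ.Odd) (u : ℝ) :
    ∫ s in (-u)..u, φ s = 0 := by
  have h := intervalIntegral.integral_comp_neg (a := -u) (b := u) φ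
  simp only [hφ _, intervalIntegral.integral_neg, neg_neg] at h
  linarith

theorem Function.Odd.intervalIntegral_neg_right (hφ : φ.Odd) (hc : Continuous φ) (c u : ℝ) :
    ∫ s in c..(-u), φ s = ∫ s in c..u, φ s := by
  rw [← intervalIntegral.integral_add_adjacent_intervals (hc.intervalIntegrable c u)
    (hc.intervalIntegrable u (-u)), intervalIntegral.integral_symm (-u) u,
    hφ.intervalIntegral_neg_eq_zero, neg_zero, add_zero]

theorem hasDerivWithinAt_div_one_sub_mul_integral {ψ X : ℝ → ℝ} {s : Set ℝ} {c t ρ : ℝ}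
    (hψ : Continuous ψ) (hX : EqOn X (fun u => ρ / (1 - ρ * ∫ r in c..u, ψ r)) s) (ht : t ∈ s)
    (hden : 1 - ρ * ∫ r in c..t, ψ r ≠ 0) :
    HasDerivWithinAt X (ψ t * X t ^ 2) s t := by
  have hD := ((hψ.integral_hasStrictDerivAt c t).hasDerivAt.const_mul ρ).const_sub 1
  refine (((hasDerivAt_const t ρ).div hD hden).hasDerivWithinAt.congr hX (hX ht)).congr_deriv ?_
  rw [hX ht]
  field_simp
  ring

end Integral

theorem ContractingWith.fixedPoint_mem_of_mapsTo {α : Type*} [MetricSpace α] [Nonempty α]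
    [CompleteSpace α] {K : ℝ≥0} {f : α → α} (hf : ContractingWith K f) {s : Set α}
    (hs : IsClosed s) (hfs : MapsTo f s s) (hne : s.Nonempty) : fixedPoint f hf ∈ s :=
  hs.mem_of_tendsto (hf.tendsto_iterate_fixedPoint hne.some)
    (Filter.Eventually.of_forall fun n => hfs.iterate n hne.some_mem)

theorem BoundedContinuousFunction.isClosed_setOf_even {α β : Type*} [TopologicalSpace α] [Neg α]
    [MetricSpace β] : IsClosed {x : α →ᵇ β | (x : α → β).Even} := by
  simp only [Function.Even, ofPred_forall]
  exact isClosed_iInter fun t => isClosed_eq (continuous_eval_const _) (continuous_eval_const _)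

section TruncatedIntegrand

variable {M F G : ℝ} {p q : ℝ → ℝ}

/-- Truncating `u` at level `M` makes `p s * u + q s` bounded and globally Lipschitz in `u`. -/
noncomputable def truncatedIntegrand (M : ℝ) (p q : ℝ → ℝ) (s u : ℝ) : ℝ :=
  p s * symmClamp M u + q s

theorem continuous_uncurry_truncatedIntegrand (hp : Continuous p) (hq : Continuous q) :
    Continuous (uncurry (truncatedIntegrand M p q)) :=
  ((hp.comp continuous_fst).mul ((continuous_symmClamp M).comp continuous_snd)).add
    (hq.comp continuous_fst)

theorem abs_truncatedIntegrand_le (hM : 0 ≤ M) (hp : ∀ s, |p s| ≤ F) (hq : ∀ s, |q s| ≤ G)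
    (s u : ℝ) : |truncatedIntegrand M p q s u| ≤ F * M + G := by
  have hF : 0 ≤ F := (abs_nonneg _).trans (hp 0)
  refine (abs_add_le _ _).trans ?_
  rw [abs_mul]
  gcongr
  exacts [hp s, abs_le.2 (symmClamp_mem hM u), hq s]

theorem lipschitzWith_truncatedIntegrand (hp : ∀ s, |p s| ≤ F) (s : ℝ) :
    LipschitzWith F.toNNReal (truncatedIntegrand M p q s) := by
  refine LipschitzWith.of_dist_le_mul fun u v => ?_
  rw [Real.coe_toNNReal _ ((abs_nonneg _).trans (hp 0)), Real.dist_eq, truncatedIntegrand,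
    truncatedIntegrand, add_sub_add_right_eq_sub, ← mul_sub, abs_mul, ← Real.dist_eq]
  have := (lipschitzWith_symmClamp M).dist_le_mul u v
  rw [NNReal.coe_one, one_mul] at this
  exact mul_le_mul (hp s) this (abs_nonneg _) ((abs_nonneg _).trans (hp 0))

theorem odd_truncatedIntegrand (hp : p.Odd) (hq : q.Odd) (u : ℝ) :
    (truncatedIntegrand M p q · u).Odd := fun s => by
  simp only [truncatedIntegrand, hp s, hq s]
  ring

theorem truncatedIntegrand_of_mem {u : ℝ} (hu : u ∈ Icc (-M) M) (s : ℝ) :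
    truncatedIntegrand M p q s u = p s * u + q s := by
  rw [truncatedIntegrand, symmClamp_of_mem hu]

end TruncatedIntegrand

theorem Continuous.uncurry_graph {α β γ : Type*} [TopologicalSpace α] [TopologicalSpace β]
    [TopologicalSpace γ] {h : α → β → γ} (hh : Continuous (uncurry h)) {x : α → β}
    (hx : Continuous x) : Continuous fun s => h s (x s) :=
  hh.comp₂ continuous_id hx

section AbelOperator

variable {a ρ B : ℝ} {L : ℝ≥0} {h : ℝ → ℝ → ℝ}

/-- The argument is clamped to `[-a, a]` so that the operator maps bounded functions on `ℝ`
to bounded functions. -/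
noncomputable def abelOperator (a ρ : ℝ) (h : ℝ → ℝ → ℝ) (x : ℝ → ℝ) (t : ℝ) : ℝ :=
  ρ / (1 - ρ * ∫ s in (-a)..symmClamp a t, h s (x s))

theorem abelOperator_of_mem (x : ℝ → ℝ) {t : ℝ} (ht : t ∈ Icc (-a) a) :
    abelOperator a ρ h x t = ρ / (1 - ρ * ∫ s in (-a)..t, h s (x s)) := by
  rw [abelOperator, symmClamp_of_mem ht]

theorem half_lt_one_sub_mul_integral (hρ : 0 ≤ ρ) (hB : ∀ s u, |h s u| ≤ B)
    (hρB : ρ * (4 * a * B) < 1) (x : ℝ → ℝ) {u : ℝ} (hu : u ∈ Icc (-a) a) :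
    1 / 2 < 1 - ρ * ∫ s in (-a)..u, h s (x s) :=
  half_lt_one_sub_mul hρ (abs_intervalIntegral_le_of_abs_le (fun s => hB s (x s)) hu) hρB

theorem continuous_abelOperator (ha : 0 ≤ a) (hρ : 0 ≤ ρ) (hh : Continuous (uncurry h))
    (hB : ∀ s u, |h s u| ≤ B) (hρB : ρ * (4 * a * B) < 1) {x : ℝ → ℝ} (hx : Continuous x) :
    Continuous (abelOperator a ρ h x) := by
  have hprim := intervalIntegral.continuous_primitive (μ := volume)
    (fun u v => (hh.uncurry_graph hx).intervalIntegrable u v) (-a)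
  exact continuous_const.div
    (continuous_const.sub (continuous_const.mul (hprim.comp (continuous_symmClamp a))))
    fun t => (one_half_pos.trans
      (half_lt_one_sub_mul_integral hρ hB hρB x (symmClamp_mem ha t))).ne'

theorem abs_abelOperator_le (ha : 0 ≤ a) (hρ : 0 ≤ ρ) (hB : ∀ s u, |h s u| ≤ B)
    (hρB : ρ * (4 * a * B) < 1) (x : ℝ → ℝ) (t : ℝ) : |abelOperator a ρ h x t| ≤ 2 * ρ :=
  abs_div_one_sub_mul_le hρ (half_lt_one_sub_mul_integral hρ hB hρB x (symmClamp_mem ha t))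

theorem abs_abelOperator_sub_le (ha : 0 ≤ a) (hρ : 0 ≤ ρ) (hh : Continuous (uncurry h))
    (hB : ∀ s u, |h s u| ≤ B) (hL : ∀ s, LipschitzWith L (h s)) (hρB : ρ * (4 * a * B) < 1)
    (x y : ℝ →ᵇ ℝ) (t : ℝ) :
    |abelOperator a ρ h x t - abelOperator a ρ h y t| ≤ 8 * a * L * ρ ^ 2 * dist x y := by
  have ht := symmClamp_mem ha t
  have hdiff : |(∫ s in (-a)..symmClamp a t, h s (x s)) - ∫ s in (-a)..symmClamp a t, h s (y s)|
      ≤ 2 * a * (L * dist x y) := by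
    rw [← intervalIntegral.integral_sub ((hh.uncurry_graph x.continuous).intervalIntegrable _ _)
      ((hh.uncurry_graph y.continuous).intervalIntegrable _ _)]
    refine abs_intervalIntegral_le_of_abs_le (fun s => ?_) ht
    rw [← Real.dist_eq]
    exact ((hL s).dist_le_mul _ _).trans
      (mul_le_mul_of_nonneg_left (x.dist_coe_le_dist s) L.2)
  calc _ ≤ 4 * ρ ^ 2 * |(∫ s in (-a)..symmClamp a t, h s (x s)) -
          ∫ s in (-a)..symmClamp a t, h s (y s)| :=
        abs_div_one_sub_mul_sub_le (half_lt_one_sub_mul_integral hρ hB hρB x ht)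
          (half_lt_one_sub_mul_integral hρ hB hρB y ht)
    _ ≤ 4 * ρ ^ 2 * (2 * a * (L * dist x y)) := by gcongr
    _ = 8 * a * L * ρ ^ 2 * dist x y := by ring

theorem abelOperator_neg (ha : 0 ≤ a) (hh : Continuous (uncurry h)) (hodd : ∀ u, (h · u).Odd)
    {x : ℝ → ℝ} (hx : Continuous x) (hxe : x.Even) (t : ℝ) :
    abelOperator a ρ h x (-t) = abelOperator a ρ h x t := by
  have hi : (fun s => h s (x s)).Odd := fun s => by simp only [hxe s, hodd (x s) s]
  rw [abelOperator, abelOperator, odd_symmClamp ha t,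
    hi.intervalIntegral_neg_right (hh.uncurry_graph hx)]

theorem exists_even_fixedPoint_abelOperator (ha : 0 ≤ a) (hρ : 0 ≤ ρ)
    (hh : Continuous (uncurry h)) (hB : ∀ s u, |h s u| ≤ B) (hL : ∀ s, LipschitzWith L (h s))
    (hodd : ∀ u, (h · u).Odd) (hρB : ρ * (4 * a * B) < 1) (hρL : 8 * a * L * ρ ^ 2 < 1) :
    ∃ x : ℝ →ᵇ ℝ, (∀ t, x t = abelOperator a ρ h x t) ∧ (x : ℝ → ℝ).Even := by
  let T : (ℝ →ᵇ ℝ) → ℝ →ᵇ ℝ := fun x =>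
    .ofNormedAddCommGroup (abelOperator a ρ h x)
      (continuous_abelOperator ha hρ hh hB hρB x.continuous) (2 * ρ)
      (abs_abelOperator_le ha hρ hB hρB x)
  have hT : ContractingWith ⟨8 * a * L * ρ ^ 2, by positivity⟩ T :=
    ⟨hρL, LipschitzWith.of_dist_le_mul fun x y =>
      (BoundedContinuousFunction.dist_le (mul_nonneg (NNReal.coe_nonneg _) dist_nonneg)).2 fun t =>
        abs_abelOperator_sub_le ha hρ hh hB hL hρB x y t⟩
  have hmaps : MapsTo T {x | (x : ℝ → ℝ).Even} {x | (x : ℝ → ℝ).Even} :=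
    fun x hx t => abelOperator_neg ha hh hodd x.continuous hx t
  refine ⟨ContractingWith.fixedPoint T hT, fun t => ?_,
    hT.fixedPoint_mem_of_mapsTo BoundedContinuousFunction.isClosed_setOf_even hmaps
      ⟨BoundedContinuousFunction.const ℝ 0, fun _ => rfl⟩⟩
  conv_lhs => rw [← hT.fixedPoint_isFixedPt]
  rfl

theorem hasDerivWithinAt_of_eq_abelOperator (hρ : 0 ≤ ρ) (hh : Continuous (uncurry h))
    (hB : ∀ s u, |h s u| ≤ B) (hρB : ρ * (4 * a * B) < 1) {x : ℝ → ℝ} (hx : Continuous x)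
    (hfix : ∀ t, x t = abelOperator a ρ h x t) {t : ℝ} (ht : t ∈ Icc (-a) a) :
    HasDerivWithinAt x (h t (x t) * x t ^ 2) (Icc (-a) a) t :=
  hasDerivWithinAt_div_one_sub_mul_integral (hh.uncurry_graph hx)
    (fun u hu => (hfix u).trans (abelOperator_of_mem x hu)) ht
    (one_half_pos.trans (half_lt_one_sub_mul_integral hρ hB hρB x ht)).ne'

end AbelOperator

/-- If `f, g` are odd continuous functions on `[-a,a]`, `M > 0` and
`0 ≤ ρ < min{M/2, 1/(4a(FM+G))}` (with `F = max |f|`, `G = max |g|`), then there is a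
continuous even function `x` on `[-a,a]` with `‖x‖_∞ ≤ M` which is a fixed point of the
integral operator, i.e. `x t = ρ / (1 - ρ ∫_{-a}^t (f x + g))`; in particular `x` solves
the Abel equation `x' = f x³ + g x²`, satisfies `x(-a) = ρ`, and is closed: `x a = x (-a)`. -/
theorem exists_closed_even_solution
    (a ρ M F G : ℝ) (ha : 0 < a) (hM : 0 < M) (f g : ℝ → ℝ)
    (hf : ContinuousOn f (Set.Icc (-a) a)) (hg : ContinuousOn g (Set.Icc (-a) a))
    (hfodd : ∀ t ∈ Set.Icc (-a) a, f (-t) = -f t)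
    (hgodd : ∀ t ∈ Set.Icc (-a) a, g (-t) = -g t)
    (hF : IsGreatest ((fun t => |f t|) '' Set.Icc (-a) a) F)
    (hG : IsGreatest ((fun t => |g t|) '' Set.Icc (-a) a) G)
    (hρ0 : 0 ≤ ρ) (hρ : ρ < min (M / 2) (1 / (4 * a * (F * M + G)))) :
    ∃ x : ℝ → ℝ, ContinuousOn x (Set.Icc (-a) a) ∧
      (∀ t ∈ Set.Icc (-a) a, x (-t) = x t) ∧
      (∀ t ∈ Set.Icc (-a) a, |x t| ≤ M) ∧
      (∀ t ∈ Set.Icc (-a) a,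
        x t = ρ / (1 - ρ * ∫ s in (-a)..t, (f s * x s + g s))) ∧
      (∀ t ∈ Set.Icc (-a) a,
        HasDerivWithinAt x (f t * x t ^ 3 + g t * x t ^ 2) (Set.Icc (-a) a) t) ∧
      x (-a) = ρ ∧ x a = x (-a) := by
  obtain ⟨hρM, hρFG⟩ := lt_min_iff.mp hρ
  have hf₁ : ∀ s, |(f ∘ symmClamp a) s| ≤ F := fun s => hF.2 ⟨_, symmClamp_mem ha.le s, rfl⟩
  have hg₁ : ∀ s, |(g ∘ symmClamp a) s| ≤ G := fun s => hG.2 ⟨_, symmClamp_mem ha.le s, rfl⟩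
  have hF0 : 0 ≤ F := (abs_nonneg _).trans (hf₁ 0)
  have hG0 : 0 ≤ G := (abs_nonneg _).trans (hg₁ 0)
  have hρB : ρ * (4 * a * (F * M + G)) < 1 := mul_lt_one_of_lt_one_div (by positivity) hρFG
  have hρL : 8 * a * F.toNNReal * ρ ^ 2 < 1 := by
    rw [Real.coe_toNNReal _ hF0]
    nlinarith [mul_nonneg (mul_nonneg ha.le hF0) hρ0, mul_nonneg (mul_nonneg ha.le hG0) hρ0]
  set h := truncatedIntegrand M (f ∘ symmClamp a) (g ∘ symmClamp a)
  have hh : Continuous (uncurry h) := continuous_uncurry_truncatedIntegrand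
    (continuous_comp_symmClamp ha.le hf) (continuous_comp_symmClamp ha.le hg)
  have hhB : ∀ s u, |h s u| ≤ F * M + G := abs_truncatedIntegrand_le hM.le hf₁ hg₁
  obtain ⟨X, hX, hXeven⟩ := exists_even_fixedPoint_abelOperator ha.le hρ0 hh hhB
    (lipschitzWith_truncatedIntegrand hf₁)
    (odd_truncatedIntegrand (odd_comp_symmClamp ha.le hfodd) (odd_comp_symmClamp ha.le hgodd))
    hρB hρL
  have hXρ : ∀ t, |X t| ≤ 2 * ρ := fun t => hX t ▸ abs_abelOperator_le ha.le hρ0 hhB hρB X t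
  have hhX : ∀ s ∈ Icc (-a) a, h s (X s) = f s * X s + g s := fun s hs =>
    (truncatedIntegrand_of_mem (abs_le.1 ((hXρ s).trans (by linarith))) s).trans
      (by rw [comp_apply, comp_apply, symmClamp_of_mem hs])
  have hleft : -a ∈ Icc (-a) a := left_mem_Icc.2 (by linarith)
  refine ⟨X, X.continuous.continuousOn, fun t _ => hXeven t,
    fun t _ => (hXρ t).trans (by linarith), fun t ht => ?_, fun t ht => ?_, ?_, (hXeven a).symm⟩
  · rw [hX, abelOperator_of_mem _ ht,
      intervalIntegral.integral_congr fun s hs => hhX s (uIcc_subset_Icc hleft ht hs)]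
  · refine (hasDerivWithinAt_of_eq_abelOperator hρ0 hh hhB hρB X.continuous hX ht).congr_deriv ?_
    rw [hhX t ht]
    ring
  · rw [hX, abelOperator_of_mem _ hleft, intervalIntegral.integral_same, mul_zero, sub_zero,
      div_one]
end

section
/- Let a > 0 and let f, g : [-a,a] → ℝ be odd continuous functions. Then the set of continuous even functions x : [-a,a] → ℝ that are differentiable solutions of the Abel equation x'(t) = f(t)x(t)^3 + g(t)x(t)^2 on [-a,a] and satisfy x(a) = x(-a) is infinite. -/
/-!
For small initial values the Abel field `f t x³ + g t x²` is small and Lipschitz on a small ball,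
so Picard–Lindelöf gives, for every `c` near `0`, a solution on `[-a, a]` with `x 0 = c` that stays
in that ball. When `f` and `g` are odd, `t ↦ x (-t)` solves the same equation with the same value
at `0`, so by uniqueness every such solution is even, and in particular `x a = x (-a)`. Distinct
initial values give distinct solutions.
-/

open Set Metric NNReal

def abelField (f g : ℝ → ℝ) (t x : ℝ) : ℝ := f t * x ^ 3 + g t * x ^ 2

def IsAbelSolutionOn (f g x : ℝ → ℝ) (s : Set ℝ) : Prop :=
  ∀ t ∈ s, HasDerivWithinAt x (abelField f g t (x t)) s t

lemma exists_forall_abs_le_of_continuousOn {f g : ℝ → ℝ} {s : Set ℝ} (hs : IsCompact s)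
    (hf : ContinuousOn f s) (hg : ContinuousOn g s) :
    ∃ M : ℝ≥0, ∀ t ∈ s, |f t| ≤ M ∧ |g t| ≤ M := by
  obtain ⟨C, hC⟩ := hs.exists_bound_of_continuousOn (hf.prodMk hg)
  refine ⟨C.toNNReal, fun t ht ↦ ⟨?_, ?_⟩⟩
  · exact (norm_fst_le (f t, g t)).trans <| (hC t ht).trans C.le_coe_toNNReal
  · exact (norm_snd_le (f t, g t)).trans <| (hC t ht).trans C.le_coe_toNNReal

-- `IsPicardLindelof.exists_eq_forall_mem_Icc_hasDerivWithinAt`, with the same proof, but keeping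
-- the information that the fixed point takes values in `closedBall x₀ a`.
theorem IsPicardLindelof.exists_eq_forall_mem_Icc_hasDerivWithinAt_mem_closedBall
    {E : Type*} [NormedAddCommGroup E] [NormedSpace ℝ E] [CompleteSpace E]
    {f : ℝ → E → E} {tmin tmax : ℝ} {t₀ : Icc tmin tmax} {x₀ x : E} {a r L K : ℝ≥0}
    (hf : IsPicardLindelof f t₀ x₀ a r L K) (hx : x ∈ closedBall x₀ r) :
    ∃ α : ℝ → E, α t₀ = x ∧ ∀ t ∈ Icc tmin tmax,
      HasDerivWithinAt α (f t (α t)) (Icc tmin tmax) t ∧ α t ∈ closedBall x₀ a := by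
  obtain ⟨α, hα⟩ := ODE.FunSpace.exists_isFixedPt_next hf hx
  refine ⟨α.compProj, by rw [ODE.FunSpace.compProj_val, ← hα, ODE.FunSpace.next_apply₀],
    fun t ht ↦ ⟨?_, α.compProj_mem_closedBall hf.mul_max_le⟩⟩
  refine ODE.hasDerivWithinAt_picard_Icc t₀.2 hf.continuousOn_uncurry
    α.continuous_compProj.continuousOn (fun _ _ ↦ α.compProj_mem_closedBall hf.mul_max_le)
    x ht |>.congr_of_mem (fun t' ht' ↦ ?_) ht
  nth_rw 1 [← hα]
  rw [ODE.FunSpace.compProj_of_mem ht', ODE.FunSpace.next_apply]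

lemma mapsTo_neg_Icc (a : ℝ) : MapsTo Neg.neg (Icc (-a) a) (Icc (-a) a) :=
  fun _ hs ↦ ⟨neg_le_neg hs.2, neg_le.1 hs.1⟩

section AbelField

variable {f g : ℝ → ℝ} {t : ℝ} {M R : ℝ≥0}

lemma abs_abelField_le (hf : |f t| ≤ M) (hg : |g t| ≤ M) {x : ℝ} (hx : |x| ≤ R) :
    |abelField f g t x| ≤ M * (R ^ 3 + R ^ 2) := by
  calc |abelField f g t x| ≤ |f t| * |x| ^ 3 + |g t| * |x| ^ 2 :=
        (abs_add_le _ _).trans_eq (by rw [abs_mul, abs_mul, abs_pow, abs_pow])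
    _ ≤ M * R ^ 3 + M * R ^ 2 := by gcongr
    _ = M * (R ^ 3 + R ^ 2) := by ring

lemma lipschitzOnWith_abelField (hf : |f t| ≤ M) (hg : |g t| ≤ M) :
    LipschitzOnWith (M * (3 * R ^ 2 + 2 * R)) (abelField f g t) (closedBall 0 R) := by
  refine LipschitzOnWith.of_dist_le_mul fun x hx y hy ↦ ?_
  rw [mem_closedBall_zero_iff, Real.norm_eq_abs] at hx hy
  have hquad : |x ^ 2 + x * y + y ^ 2| ≤ 3 * R ^ 2 := by
    calc |x ^ 2 + x * y + y ^ 2| ≤ |x| ^ 2 + |x| * |y| + |y| ^ 2 :=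
          (abs_add_three _ _ _).trans_eq (by rw [abs_mul, abs_pow, abs_pow])
      _ ≤ 3 * R ^ 2 := by nlinarith [abs_nonneg x, abs_nonneg y]
  have hlin : |x + y| ≤ 2 * R := by linarith [abs_add_le x y]
  have hdiff : abelField f g t x - abelField f g t y =
      (f t * (x ^ 2 + x * y + y ^ 2) + g t * (x + y)) * (x - y) := by
    simp only [abelField]; ring
  rw [Real.dist_eq, Real.dist_eq, hdiff, abs_mul]
  gcongr
  calc |f t * (x ^ 2 + x * y + y ^ 2) + g t * (x + y)|
      ≤ |f t| * |x ^ 2 + x * y + y ^ 2| + |g t| * |x + y| :=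
        (abs_add_le _ _).trans_eq (by rw [abs_mul, abs_mul])
    _ ≤ M * (3 * R ^ 2) + M * (2 * R) := by gcongr
    _ = ((M * (3 * R ^ 2 + 2 * R) : ℝ≥0) : ℝ) := by push_cast; ring

lemma abelField_neg_left (hf : f (-t) = -f t) (hg : g (-t) = -g t) (x : ℝ) :
    abelField f g (-t) x = -abelField f g t x := by
  simp only [abelField, hf, hg]; ring

end AbelField

namespace IsAbelSolutionOn

variable {f g x y : ℝ → ℝ}

lemma continuousOn {s : Set ℝ} (hx : IsAbelSolutionOn f g x s) : ContinuousOn x s :=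
  fun t ht ↦ (hx t ht).continuousWithinAt

theorem eqOn {tmin tmax t₀ : ℝ} {R : ℝ≥0}
    (hf : ContinuousOn f (Icc tmin tmax)) (hg : ContinuousOn g (Icc tmin tmax))
    (hx : IsAbelSolutionOn f g x (Icc tmin tmax)) (hxR : MapsTo x (Icc tmin tmax) (closedBall 0 R))
    (hy : IsAbelSolutionOn f g y (Icc tmin tmax)) (hyR : MapsTo y (Icc tmin tmax) (closedBall 0 R))
    (ht₀ : t₀ ∈ Ioo tmin tmax) (hxy : x t₀ = y t₀) :
    EqOn x y (Icc tmin tmax) := by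
  obtain ⟨M, hM⟩ := exists_forall_abs_le_of_continuousOn isCompact_Icc hf hg
  have hderiv : ∀ z, IsAbelSolutionOn f g z (Icc tmin tmax) →
      ∀ t ∈ Ioo tmin tmax, HasDerivAt z (abelField f g t (z t)) t :=
    fun z hz t ht ↦ (hz t (Ioo_subset_Icc_self ht)).hasDerivAt (Icc_mem_nhds ht.1 ht.2)
  exact ODE_solution_unique_of_mem_Icc (s := fun _ ↦ closedBall 0 R)
    (fun t ht ↦ lipschitzOnWith_abelField (hM t (Ioo_subset_Icc_self ht)).1
      (hM t (Ioo_subset_Icc_self ht)).2)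
    ht₀ hx.continuousOn (hderiv x hx) (fun _ ht ↦ hxR (Ioo_subset_Icc_self ht))
    hy.continuousOn (hderiv y hy) (fun _ ht ↦ hyR (Ioo_subset_Icc_self ht)) hxy

theorem comp_neg {a : ℝ} (hfodd : ∀ t ∈ Icc (-a) a, f (-t) = -f t)
    (hgodd : ∀ t ∈ Icc (-a) a, g (-t) = -g t) (hx : IsAbelSolutionOn f g x (Icc (-a) a)) :
    IsAbelSolutionOn f g (fun t ↦ x (-t)) (Icc (-a) a) := by
  intro t ht
  have := (hx (-t) (mapsTo_neg_Icc a ht)).scomp t (hasDerivAt_neg t).hasDerivWithinAt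
    (mapsTo_neg_Icc a)
  rwa [abelField_neg_left (hfodd t ht) (hgodd t ht), neg_one_smul, neg_neg] at this

theorem even {a : ℝ} {R : ℝ≥0} (ha : 0 < a)
    (hf : ContinuousOn f (Icc (-a) a)) (hg : ContinuousOn g (Icc (-a) a))
    (hfodd : ∀ t ∈ Icc (-a) a, f (-t) = -f t) (hgodd : ∀ t ∈ Icc (-a) a, g (-t) = -g t)
    (hx : IsAbelSolutionOn f g x (Icc (-a) a)) (hxR : MapsTo x (Icc (-a) a) (closedBall 0 R)) :
    ∀ t ∈ Icc (-a) a, x (-t) = x t :=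
  (hx.comp_neg hfodd hgodd).eqOn hf hg (hxR.comp (mapsTo_neg_Icc a)) hx hxR
    ⟨neg_lt_zero.2 ha, ha⟩ (by rw [neg_zero])

end IsAbelSolutionOn

theorem exists_pos_forall_mem_closedBall_exists_isAbelSolutionOn {f g : ℝ → ℝ} {tmin tmax : ℝ}
    (hf : ContinuousOn f (Icc tmin tmax)) (hg : ContinuousOn g (Icc tmin tmax))
    (t₀ : Icc tmin tmax) :
    ∃ ρ : ℝ≥0, 0 < ρ ∧ ∀ c ∈ closedBall (0 : ℝ) ρ, ∃ x : ℝ → ℝ, x t₀ = c ∧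
      IsAbelSolutionOn f g x (Icc tmin tmax) ∧ MapsTo x (Icc tmin tmax) (closedBall 0 (2 * ρ : ℝ≥0)) := by
  obtain ⟨M, hM⟩ := exists_forall_abs_le_of_continuousOn isCompact_Icc hf hg
  set T : ℝ≥0 := ⟨max (tmax - t₀) (t₀ - tmin), le_max_of_le_left (sub_nonneg.2 t₀.2.2)⟩
  set ρ : ℝ≥0 := (12 * M * T + 1)⁻¹
  have hρ : 0 < ρ := by positivity
  have hρ1 : ρ ≤ 1 := inv_le_one_of_one_le₀ le_add_self
  -- On the ball of radius `2ρ ≤ 2` the field is bounded by `12 M ρ²`, so over a time `T` a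
  -- solution starting in the ball of radius `ρ` moves by at most `12 M T ρ² ≤ ρ`.
  have hPL : IsPicardLindelof (abelField f g) t₀ 0 (2 * ρ) ρ
      (M * ((2 * ρ) ^ 3 + (2 * ρ) ^ 2)) (M * (3 * (2 * ρ) ^ 2 + 2 * (2 * ρ))) := by
    refine ⟨fun t ht ↦ lipschitzOnWith_abelField (hM t ht).1 (hM t ht).2, fun x _ ↦ ?_,
      fun t ht x hx ↦ ?_, ?_⟩
    · exact (hf.mul continuousOn_const).add (hg.mul continuousOn_const)
    · rw [mem_closedBall_zero_iff, Real.norm_eq_abs] at hx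
      exact abs_abelField_le (hM t ht).1 (hM t ht).2 hx
    · have hρT : 12 * M * T * ρ ≤ 1 := div_le_one_of_le₀ le_self_add (by positivity)
      change (M * ((2 * ρ) ^ 3 + (2 * ρ) ^ 2) * T : ℝ) ≤ 2 * ρ - ρ
      calc (M * ((2 * ρ) ^ 3 + (2 * ρ) ^ 2) * T : ℝ) = M * T * (8 * ρ ^ 3 + 4 * ρ ^ 2) := by ring
        _ ≤ M * T * (8 * ρ ^ 2 + 4 * ρ ^ 2) := by
            have : (ρ : ℝ) ^ 3 ≤ ρ ^ 2 := pow_le_pow_of_le_one ρ.2 hρ1 (by norm_num)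
            gcongr ?_ * (8 * ?_ + _)
        _ = ρ * (12 * M * T * ρ) := by ring
        _ ≤ ρ := mul_le_of_le_one_right ρ.2 (by exact_mod_cast hρT)
        _ = 2 * ρ - ρ := by ring
  refine ⟨ρ, hρ, fun c hc ↦ ?_⟩
  obtain ⟨x, hx₀, hx⟩ := hPL.exists_eq_forall_mem_Icc_hasDerivWithinAt_mem_closedBall hc
  exact ⟨x, hx₀, fun t ht ↦ (hx t ht).1, fun t ht ↦ (hx t ht).2⟩

/-- If `f, g` are odd continuous functions on `[-a,a]`, then there are
infinitely many continuous even differentiable solutions of the Abel equation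
`x' = f x³ + g x²` on `[-a,a]` satisfying `x a = x (-a)` (counted as functions on
`[-a,a]`, i.e. the set of their restrictions to `[-a,a]` is infinite). -/
theorem infinitely_many_closed_even_solutions
    (a : ℝ) (ha : 0 < a) (f g : ℝ → ℝ)
    (hf : ContinuousOn f (Set.Icc (-a) a)) (hg : ContinuousOn g (Set.Icc (-a) a))
    (hfodd : ∀ t ∈ Set.Icc (-a) a, f (-t) = -f t)
    (hgodd : ∀ t ∈ Set.Icc (-a) a, g (-t) = -g t) :
    ((Set.Icc (-a) a).restrict ''
      {x : ℝ → ℝ | ContinuousOn x (Set.Icc (-a) a) ∧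
        (∀ t ∈ Set.Icc (-a) a, x (-t) = x t) ∧
        (∀ t ∈ Set.Icc (-a) a,
          HasDerivWithinAt x (f t * x t ^ 3 + g t * x t ^ 2) (Set.Icc (-a) a) t) ∧
        x a = x (-a)}).Infinite := by
  have h0 : (0 : ℝ) ∈ Icc (-a) a := ⟨neg_nonpos.2 ha.le, ha.le⟩
  obtain ⟨ρ, hρ, hsol⟩ := exists_pos_forall_mem_closedBall_exists_isAbelSolutionOn hf hg ⟨0, h0⟩
  choose x hx₀ hx hxR using hsol
  have heven c hc := (hx c hc).even ha hf hg hfodd hgodd (hxR c hc)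
  have : Infinite (closedBall (0 : ℝ) ρ) := by
    rw [Real.closedBall_eq_Icc]
    exact (Icc_infinite (by simpa using hρ)).to_subtype
  refine infinite_of_injective_forall_mem
    (f := fun c : closedBall (0 : ℝ) ρ ↦ (Icc (-a) a).restrict (x c c.2)) (fun c d hcd ↦ ?_)
    fun ⟨c, hc⟩ ↦ ⟨x c hc, ⟨(hx c hc).continuousOn, heven c hc, hx c hc,
      (heven c hc a ⟨neg_le_self ha.le, le_rfl⟩).symm⟩, rfl⟩
  exact Subtype.ext <| (hx₀ c c.2).symm.trans <| (congrFun hcd ⟨0, h0⟩).trans (hx₀ d d.2)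
end

section
/- Let a > 0, let f : [-a,a] → ℝ be an odd continuous function, and let g : [-a,a] → ℝ be continuous. Suppose there exists a differentiable even function x : [-a,a] → ℝ with x(t) ≠ 0 for all t ∈ [-a,a] solving the Abel equation x'(t) = f(t)x(t)^3 + g(t)x(t)^2 on [-a,a]. Then g is odd, i.e., g(−t) = −g(t) for all t ∈ [-a,a]. -/
/-- If `f` is odd continuous and `g` is continuous on `[-a,a]`, and there is a
differentiable even nonvanishing solution `x` of the Abel equation `x' = f x³ + g x²` on
`[-a,a]`, then `g` is odd on `[-a,a]`. -/
theorem g_odd_of_even_solution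
    (a : ℝ) (ha : 0 < a) (f g : ℝ → ℝ)
    (hf : ContinuousOn f (Set.Icc (-a) a)) (hg : ContinuousOn g (Set.Icc (-a) a))
    (hfodd : ∀ t ∈ Set.Icc (-a) a, f (-t) = -f t)
    (x : ℝ → ℝ)
    (hx : ∀ t ∈ Set.Icc (-a) a,
      HasDerivWithinAt x (f t * x t ^ 3 + g t * x t ^ 2) (Set.Icc (-a) a) t)
    (hxeven : ∀ t ∈ Set.Icc (-a) a, x (-t) = x t)
    (hx0 : ∀ t ∈ Set.Icc (-a) a, x t ≠ 0) :
    ∀ t ∈ Set.Icc (-a) a, g (-t) = -g t := by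
  intro t ht
  obtain ⟨ht1, ht2⟩ := ht
  have hnt : -t ∈ Set.Icc (-a) a := ⟨by linarith, by linarith⟩
  have ht' : t ∈ Set.Icc (-a) a := ⟨ht1, ht2⟩
  set S := Set.Icc (-a) a
  -- derivative of x at -t from the equation
  have h1 : HasDerivWithinAt x (f (-t) * x (-t) ^ 3 + g (-t) * x (-t) ^ 2) S (-t) :=
    hx (-t) hnt
  -- derivative at -t via evenness
  have hneg : HasDerivWithinAt (fun s : ℝ => -s) (-1) S (-t) :=
    (hasDerivAt_neg (-t)).hasDerivWithinAt
  have hmaps : Set.MapsTo (fun s : ℝ => -s) S S := by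
    rintro s ⟨hs1, hs2⟩
    exact ⟨by simp; linarith, by simp; linarith⟩
  have hcomp : HasDerivWithinAt (x ∘ fun s : ℝ => -s)
      ((f t * x t ^ 3 + g t * x t ^ 2) * (-1)) S (-t) := by
    have hx' : HasDerivWithinAt x (f t * x t ^ 3 + g t * x t ^ 2) S (- -t) := by
      rw [neg_neg]; exact hx t ht'
    exact hx'.comp (-t) hneg hmaps
  have h2 : HasDerivWithinAt x ((f t * x t ^ 3 + g t * x t ^ 2) * (-1)) S (-t) := by
    refine hcomp.congr (fun y hy => ?_) ?_
    · exact (hxeven y hy).symm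
    · simpa using (hxeven (-t) hnt).symm
  have hud : UniqueDiffWithinAt ℝ S (-t) :=
    (uniqueDiffOn_Icc (by linarith : -a < a)) (-t) hnt
  have heq : f (-t) * x (-t) ^ 3 + g (-t) * x (-t) ^ 2
      = (f t * x t ^ 3 + g t * x t ^ 2) * (-1) := by
    rw [← h1.derivWithin hud, ← h2.derivWithin hud]
  rw [hxeven t ht', hfodd t ht'] at heq
  have hx2 : x t ^ 2 ≠ 0 := pow_ne_zero _ (hx0 t ht')
  have key : g (-t) * x t ^ 2 = -g t * x t ^ 2 := by nlinarith [heq]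
  exact mul_right_cancel₀ hx2 key
end

section
/- Let a > 0, let g : [-a,a] → ℝ be an odd continuous function, and let f : [-a,a] → ℝ be continuous. Suppose there exists a differentiable even function x : [-a,a] → ℝ with x(t) ≠ 0 for all t ∈ [-a,a] solving the Abel equation x'(t) = f(t)x(t)^3 + g(t)x(t)^2 on [-a,a]. Then f is odd, i.e., f(−t) = −f(t) for all t ∈ [-a,a]. -/
/-- If `g` is odd continuous and `f` is continuous on `[-a,a]`, and there is a
differentiable even nonvanishing solution `x` of the Abel equation `x' = f x³ + g x²` on
`[-a,a]`, then `f` is odd on `[-a,a]`. -/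
theorem f_odd_of_even_solution
    (a : ℝ) (ha : 0 < a) (f g : ℝ → ℝ)
    (hf : ContinuousOn f (Set.Icc (-a) a)) (hg : ContinuousOn g (Set.Icc (-a) a))
    (hgodd : ∀ t ∈ Set.Icc (-a) a, g (-t) = -g t)
    (x : ℝ → ℝ)
    (hx : ∀ t ∈ Set.Icc (-a) a,
      HasDerivWithinAt x (f t * x t ^ 3 + g t * x t ^ 2) (Set.Icc (-a) a) t)
    (hxeven : ∀ t ∈ Set.Icc (-a) a, x (-t) = x t)
    (hx0 : ∀ t ∈ Set.Icc (-a) a, x t ≠ 0) :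
    ∀ t ∈ Set.Icc (-a) a, f (-t) = -f t := by
  intro t ht
  obtain ⟨ht1, ht2⟩ := ht
  have hnt : -t ∈ Set.Icc (-a) a := ⟨by linarith, by linarith⟩
  have ht' : t ∈ Set.Icc (-a) a := ⟨ht1, ht2⟩
  -- derivative of s ↦ x(-s) at t within Icc
  have hneg : HasDerivWithinAt (fun s : ℝ => -s) (-1) (Set.Icc (-a) a) t :=
    (hasDerivAt_neg t).hasDerivWithinAt
  have hmaps : Set.MapsTo (fun s : ℝ => -s) (Set.Icc (-a) a) (Set.Icc (-a) a) := by
    intro s hs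
    simp only [Set.mem_Icc] at hs ⊢
    constructor <;> linarith
  have hcomp : HasDerivWithinAt (fun s => x (-s))
      ((f (-t) * x (-t) ^ 3 + g (-t) * x (-t) ^ 2) * (-1)) (Set.Icc (-a) a) t :=
    HasDerivWithinAt.comp t (hx (-t) hnt) hneg hmaps
  -- but x(-s) = x s on the interval
  have hcongr : HasDerivWithinAt x
      ((f (-t) * x (-t) ^ 3 + g (-t) * x (-t) ^ 2) * (-1)) (Set.Icc (-a) a) t := by
    apply hcomp.congr
    · intro s hs; exact (hxeven s hs).symm
    · exact (hxeven t ht').symm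
  have hud : UniqueDiffWithinAt ℝ (Set.Icc (-a) a) t :=
    uniqueDiffOn_Icc (by linarith) t ht'
  have heq : (f (-t) * x (-t) ^ 3 + g (-t) * x (-t) ^ 2) * (-1)
      = f t * x t ^ 3 + g t * x t ^ 2 :=
    hcongr.derivWithin hud ▸ (hx t ht').derivWithin hud
  rw [hxeven t ht', hgodd t ht'] at heq
  have hx3 : x t ^ 3 ≠ 0 := pow_ne_zero _ (hx0 t ht')
  have : (f (-t) + f t) * x t ^ 3 = 0 := by ring_nf; ring_nf at heq; linarith
  rcases mul_eq_zero.mp this with h | h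
  · linarith
  · exact absurd h hx3
end

section
/- Let a > 0, let f, g : [-a,a] → ℝ be odd continuous functions, let M > 0, and let 0 ≤ ρ < min{M/2, 1/(4a(FM + G))}. If y : [-a,a] → ℝ is any differentiable solution of the Abel equation y'(t) = f(t)y(t)^3 + g(t)y(t)^2 with y(-a) = ρ and ‖y‖_∞ ≤ M, then y is even (y(−t) = y(t) for all t ∈ [-a,a]); in particular y is closed, i.e., y(a) = y(-a). Consequently the origin x = 0 is a center of the Abel equation: all solutions with sufficiently small nonnegative initial value at t = -a are closed. -/
/-!
Since `f` and `g` are odd, the right-hand side `v t x = f t x³ + g t x²` is odd in `t`, so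
`t ↦ y (-t)` solves the same equation as `y`, and the two agree at `t = 0`. On the ball of
radius `M`, where both solutions stay, `v t` is Lipschitz uniformly in `t` (with constant
`3FM² + 2GM`), so uniqueness of solutions forces `y (-t) = y t`.
-/

open Set Metric

theorem abs_pow_sub_pow_le_of_mem_closedBall {x z M : ℝ} (n : ℕ)
    (hx : x ∈ closedBall 0 M) (hz : z ∈ closedBall 0 M) :
    |x ^ n - z ^ n| ≤ n * M ^ (n - 1) * |x - z| := by
  rw [mem_closedBall_zero_iff, Real.norm_eq_abs] at hx hz
  calc |x ^ n - z ^ n| ≤ |x - z| * n * max |x| |z| ^ (n - 1) := abs_pow_sub_pow_le ..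
    _ ≤ |x - z| * n * M ^ (n - 1) := by gcongr; exact max_le hx hz
    _ = n * M ^ (n - 1) * |x - z| := by ring

theorem lipschitzOnWith_cubic_add_quadratic {p q P Q M : ℝ} (hp : |p| ≤ P) (hq : |q| ≤ Q) :
    LipschitzOnWith (3 * P * M ^ 2 + 2 * Q * M).toNNReal (fun x ↦ p * x ^ 3 + q * x ^ 2)
      (closedBall 0 M) := by
  refine LipschitzOnWith.of_dist_le' fun x hx z hz ↦ ?_
  have h3 : |x ^ 3 - z ^ 3| ≤ 3 * M ^ 2 * |x - z| := by
    simpa using abs_pow_sub_pow_le_of_mem_closedBall 3 hx hz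
  have h2 : |x ^ 2 - z ^ 2| ≤ 2 * M * |x - z| := by
    simpa using abs_pow_sub_pow_le_of_mem_closedBall 2 hx hz
  rw [Real.dist_eq, Real.dist_eq]
  calc |p * x ^ 3 + q * x ^ 2 - (p * z ^ 3 + q * z ^ 2)|
      = |p * (x ^ 3 - z ^ 3) + q * (x ^ 2 - z ^ 2)| := by ring_nf
    _ ≤ |p| * |x ^ 3 - z ^ 3| + |q| * |x ^ 2 - z ^ 2| := by
      rw [← abs_mul, ← abs_mul]; exact abs_add_le _ _
    _ ≤ P * (3 * M ^ 2 * |x - z|) + Q * (2 * M * |x - z|) := by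
      have hP : 0 ≤ P := (abs_nonneg p).trans hp
      have hQ : 0 ≤ Q := (abs_nonneg q).trans hq
      gcongr
    _ = (3 * P * M ^ 2 + 2 * Q * M) * |x - z| := by ring

theorem HasDerivAt.comp_neg {E : Type*} [NormedAddCommGroup E] [NormedSpace ℝ E]
    {y : ℝ → E} {y' : E} {t : ℝ} (hy : HasDerivAt y y' (-t)) :
    HasDerivAt (fun s ↦ y (-s)) (-y') t := by
  simpa using HasDerivAt.comp_const_sub 0 t ((zero_sub t).symm ▸ hy)

theorem ODE_solution_even_of_odd {E : Type*} [NormedAddCommGroup E] [NormedSpace ℝ E]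
    {v : ℝ → E → E} {s : Set E} {K : NNReal} {a : ℝ} {y : ℝ → E} (ha : 0 < a)
    (hv : ∀ t ∈ Ioo (-a) a, LipschitzOnWith K (v t) s)
    (hodd : ∀ t ∈ Ioo (-a) a, ∀ x, v (-t) x = -v t x)
    (hy : ContinuousOn y (Icc (-a) a)) (hy' : ∀ t ∈ Ioo (-a) a, HasDerivAt y (v t (y t)) t)
    (hys : ∀ t ∈ Ioo (-a) a, y t ∈ s) :
    ∀ t ∈ Icc (-a) a, y (-t) = y t := by
  have hneg_Ioo : MapsTo Neg.neg (Ioo (-a) a) (Ioo (-a) a) := fun t ht ↦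
    ⟨by linarith [ht.2], by linarith [ht.1]⟩
  have hneg_Icc : MapsTo Neg.neg (Icc (-a) a) (Icc (-a) a) := fun t ht ↦
    ⟨by linarith [ht.2], by linarith [ht.1]⟩
  have hy_neg' : ∀ t ∈ Ioo (-a) a, HasDerivAt (fun s ↦ y (-s)) (v t (y (-t))) t :=
    fun t ht ↦ by simpa [hodd t ht] using (hy' _ (hneg_Ioo ht)).comp_neg
  exact ODE_solution_unique_of_mem_Icc hv (t₀ := 0) ⟨by linarith, ha⟩
    (hy.comp continuousOn_neg hneg_Icc) hy_neg' (fun t ht ↦ hys _ (hneg_Ioo ht))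
    hy hy' hys (by simp)

theorem center_of_abel_equation_general
    (a M F G : ℝ) (ha : 0 < a) (f g : ℝ → ℝ)
    (hfodd : ∀ t ∈ Set.Icc (-a) a, f (-t) = -f t)
    (hgodd : ∀ t ∈ Set.Icc (-a) a, g (-t) = -g t)
    (hF : IsGreatest ((fun t => |f t|) '' Set.Icc (-a) a) F)
    (hG : IsGreatest ((fun t => |g t|) '' Set.Icc (-a) a) G)
    (y : ℝ → ℝ)
    (hy : ∀ t ∈ Set.Icc (-a) a,
      HasDerivWithinAt y (f t * y t ^ 3 + g t * y t ^ 2) (Set.Icc (-a) a) t)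
    (hyM : ∀ t ∈ Set.Icc (-a) a, |y t| ≤ M) :
    (∀ t ∈ Set.Icc (-a) a, y (-t) = y t) ∧ y a = y (-a) := by
  have heven : ∀ t ∈ Icc (-a) a, y (-t) = y t := by
    refine ODE_solution_even_of_odd (v := fun t x ↦ f t * x ^ 3 + g t * x ^ 2)
      (s := closedBall 0 M) ha
      (fun t ht ↦ lipschitzOnWith_cubic_add_quadratic (hF.2 ⟨t, Ioo_subset_Icc_self ht, rfl⟩)
        (hG.2 ⟨t, Ioo_subset_Icc_self ht, rfl⟩))
      (fun t ht x ↦ ?_) (fun t ht ↦ (hy t ht).continuousWithinAt)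
      (fun t ht ↦ (hy t (Ioo_subset_Icc_self ht)).hasDerivAt (Icc_mem_nhds ht.1 ht.2))
      (fun t ht ↦ ?_)
    · rw [hfodd t (Ioo_subset_Icc_self ht), hgodd t (Ioo_subset_Icc_self ht)]; ring
    · simpa using hyM t (Ioo_subset_Icc_self ht)
  exact ⟨heven, by simpa using (heven a ⟨by linarith, le_rfl⟩).symm⟩

/-- If `f, g` are odd continuous on `[-a,a]`, `M > 0`, and
`0 ≤ ρ < min{M/2, 1/(4a(FM+G))}` (with `F = max |f|`, `G = max |g|`), then every
differentiable solution `y` of the Abel equation `y' = f y³ + g y²` with `y(-a) = ρ`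
and `‖y‖_∞ ≤ M` is even on `[-a,a]`, and in particular closed: `y a = y (-a)`.
This expresses that the origin is a center: all solutions with sufficiently small
nonnegative initial value at `t = -a` are closed. -/
theorem center_of_abel_equation
    (a ρ M F G : ℝ) (ha : 0 < a) (hM : 0 < M) (f g : ℝ → ℝ)
    (hf : ContinuousOn f (Set.Icc (-a) a)) (hg : ContinuousOn g (Set.Icc (-a) a))
    (hfodd : ∀ t ∈ Set.Icc (-a) a, f (-t) = -f t)
    (hgodd : ∀ t ∈ Set.Icc (-a) a, g (-t) = -g t)
    (hF : IsGreatest ((fun t => |f t|) '' Set.Icc (-a) a) F)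
    (hG : IsGreatest ((fun t => |g t|) '' Set.Icc (-a) a) G)
    (hρ0 : 0 ≤ ρ) (hρ : ρ < min (M / 2) (1 / (4 * a * (F * M + G))))
    (y : ℝ → ℝ)
    (hy : ∀ t ∈ Set.Icc (-a) a,
      HasDerivWithinAt y (f t * y t ^ 3 + g t * y t ^ 2) (Set.Icc (-a) a) t)
    (hyρ : y (-a) = ρ)
    (hyM : ∀ t ∈ Set.Icc (-a) a, |y t| ≤ M) :
    (∀ t ∈ Set.Icc (-a) a, y (-t) = y t) ∧ y a = y (-a) :=
  center_of_abel_equation_general a M F G ha f g hfodd hgodd hF hG y hy hyM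
end

section
/- Let n ≥ 2 be an integer, let I ⊆ ℝ be an interval, let A, B : ℝ → ℝ with B differentiable, and let r : I → ℝ be a differentiable function with r(θ) > 0 and 1 + B(θ)r(θ)^{n−1} > 0 for all θ ∈ I, satisfying r'(θ) = A(θ)r(θ)^n / (1 + B(θ)r(θ)^{n−1}). Define γ : I → ℝ by γ(θ) = r(θ)^{n−1} / (1 + B(θ)r(θ)^{n−1}). Then γ is differentiable and satisfies the Abel equation γ'(θ) = −(n−1)A(θ)B(θ)γ(θ)^3 + [(n−1)A(θ) − B'(θ)]γ(θ)^2 for all θ ∈ I. -/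
/-! The substitution `u = r^(n-1)` turns the equation for `r` into `u' = (n-1) A u² / (1 + B u)`,
and the Möbius change `γ = u / (1 + B u)` has `γ' = (u' - B' u²) / (1 + B u)²`. Since
`u / (1 + B u) = γ` and `1 / (1 + B u) = 1 - B γ`, this is `γ' = (n-1) A γ² (1 - B γ) - B' γ²`. -/

variable {f g : ℝ → ℝ} {f' g' c x : ℝ} {s : Set ℝ}

theorem HasDerivWithinAt.fun_pow_of_hasDerivWithinAt_mul_pow_succ (m : ℕ)
    (hf : HasDerivWithinAt f (c * f x ^ (m + 1)) s x) :
    HasDerivWithinAt (fun t => f t ^ m) (m * c * (f x ^ m) ^ 2) s x := by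
  refine (hf.fun_pow m).congr_deriv ?_
  cases m with
  | zero => simp
  | succ k => push_cast; ring

theorem HasDerivWithinAt.div_one_add_mul (hf : HasDerivWithinAt f f' s x)
    (hg : HasDerivWithinAt g g' s x) (hx : 1 + g x * f x ≠ 0) :
    HasDerivWithinAt (fun t => f t / (1 + g t * f t))
      ((f' - g' * f x ^ 2) / (1 + g x * f x) ^ 2) s x := by
  refine (hf.fun_div ((hg.fun_mul hf).const_add 1) hx).congr_deriv ?_
  ring

theorem cherkas_transformation_general
    (n : ℕ) (hn : 2 ≤ n) (I : Set ℝ)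
    (A B B' : ℝ → ℝ) (hB : ∀ θ : ℝ, HasDerivAt B (B' θ) θ)
    (r : ℝ → ℝ)
    (hden : ∀ θ ∈ I, 0 < 1 + B θ * r θ ^ (n - 1))
    (hr : ∀ θ ∈ I, HasDerivWithinAt r
      (A θ * r θ ^ n / (1 + B θ * r θ ^ (n - 1))) I θ) :
    ∀ θ ∈ I, HasDerivWithinAt
      (fun θ => r θ ^ (n - 1) / (1 + B θ * r θ ^ (n - 1)))
      (-((n : ℝ) - 1) * A θ * B θ * (r θ ^ (n - 1) / (1 + B θ * r θ ^ (n - 1))) ^ 3 +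
        (((n : ℝ) - 1) * A θ - B' θ) * (r θ ^ (n - 1) / (1 + B θ * r θ ^ (n - 1))) ^ 2)
      I θ := by
  intro θ hθ
  have hD := (hden θ hθ).ne'
  have hcast : ((n - 1 : ℕ) : ℝ) = n - 1 := by push_cast [show 1 ≤ n by omega]; ring
  have hu : HasDerivWithinAt (fun t => r t ^ (n - 1))
      ((n - 1 : ℕ) * (A θ / (1 + B θ * r θ ^ (n - 1))) * (r θ ^ (n - 1)) ^ 2) I θ := by
    refine HasDerivWithinAt.fun_pow_of_hasDerivWithinAt_mul_pow_succ (n - 1) ?_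
    convert hr θ hθ using 1
    rw [Nat.sub_add_cancel (by omega)]
    ring
  refine (hu.div_one_add_mul (hB θ).hasDerivWithinAt hD).congr_deriv ?_
  rw [hcast]
  field_simp
  ring

/-- Cherkas transformation: Let `n ≥ 2`, let `I` be an interval, let `B` be
differentiable with derivative `B'`, and let `r` be a positive solution of
`r' = A r^n / (1 + B r^(n-1))` on `I` with `1 + B θ r θ^(n-1) > 0`. Then
`γ = r^(n-1) / (1 + B r^(n-1))` satisfies the Abel equation
`γ' = -(n-1) A B γ³ + ((n-1) A - B') γ²` on `I`. -/
theorem cherkas_transformation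
    (n : ℕ) (hn : 2 ≤ n) (I : Set ℝ) (hI : I.OrdConnected)
    (A B B' : ℝ → ℝ) (hB : ∀ θ : ℝ, HasDerivAt B (B' θ) θ)
    (r : ℝ → ℝ)
    (hrpos : ∀ θ ∈ I, 0 < r θ)
    (hden : ∀ θ ∈ I, 0 < 1 + B θ * r θ ^ (n - 1))
    (hr : ∀ θ ∈ I, HasDerivWithinAt r
      (A θ * r θ ^ n / (1 + B θ * r θ ^ (n - 1))) I θ) :
    ∀ θ ∈ I, HasDerivWithinAt
      (fun θ => r θ ^ (n - 1) / (1 + B θ * r θ ^ (n - 1)))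
      (-((n : ℝ) - 1) * A θ * B θ * (r θ ^ (n - 1) / (1 + B θ * r θ ^ (n - 1))) ^ 3 +
        (((n : ℝ) - 1) * A θ - B' θ) * (r θ ^ (n - 1) / (1 + B θ * r θ ^ (n - 1))) ^ 2)
      I θ :=
  cherkas_transformation_general n hn I A B B' hB r hden hr
end

section
/- Define F(θ) = −336 sin(θ)cos(θ)^9 + 144 sin(θ)cos(θ)^7 + 192 sin(θ)cos(θ)^{11} and G(θ) = 6 cos(θ)^3 sin(θ). Then for every real number c there exists θ ∈ ℝ such that F(θ) ≠ c · G(θ)^3; that is, there is no constant c ∈ ℝ with F = c·G³ identically. -/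
/-- With
`F(θ) = -336 sin θ cos⁹ θ + 144 sin θ cos⁷ θ + 192 sin θ cos¹¹ θ` and
`G(θ) = 6 cos³ θ sin θ`, for every `c ∈ ℝ` there is `θ` with `F(θ) ≠ c · G(θ)³`;
i.e. there is no constant `c` with `F = c · G³` identically. -/
theorem no_constant_multiple
    (F G : ℝ → ℝ)
    (hF : F = fun θ => -336 * Real.sin θ * Real.cos θ ^ 9 +
      144 * Real.sin θ * Real.cos θ ^ 7 + 192 * Real.sin θ * Real.cos θ ^ 11)
    (hG : G = fun θ => 6 * Real.cos θ ^ 3 * Real.sin θ) :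
    ∀ c : ℝ, ∃ θ : ℝ, F θ ≠ c * G θ ^ 3 := by
  intro c
  by_contra h
  push_neg at h
  have h1 := h (Real.pi / 4)
  have h2 := h (Real.pi / 3)
  rw [hF, hG] at h1 h2
  simp only [Real.sin_pi_div_four, Real.cos_pi_div_four,
    Real.sin_pi_div_three, Real.cos_pi_div_three] at h1 h2
  have hs2 : Real.sqrt 2 ^ 2 = 2 := Real.sq_sqrt (by norm_num)
  have hs3 : Real.sqrt 3 ^ 2 = 3 := Real.sq_sqrt (by norm_num)
  have hs3pos : (0:ℝ) < Real.sqrt 3 := Real.sqrt_pos.mpr (by norm_num)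
  set x : ℝ := Real.sqrt 2 / 2 with hxdef
  have hx : x ^ 2 = 1 / 2 := by rw [hxdef, div_pow, hs2]; norm_num
  have hx8 : x ^ 8 = 1 / 16 := by
    have h8 : x ^ 8 = (x ^ 2) ^ 4 := by ring
    rw [h8, hx]; norm_num
  have hx10 : x ^ 10 = 1 / 32 := by
    have h10 : x ^ 10 = (x ^ 2) ^ 5 := by ring
    rw [h10, hx]; norm_num
  have hx12 : x ^ 12 = 1 / 64 := by
    have h12 : x ^ 12 = (x ^ 2) ^ 6 := by ring
    rw [h12, hx]; norm_num
  have h1' : -336 * x ^ 10 + 144 * x ^ 8 + 192 * x ^ 12 = 216 * c * x ^ 12 := by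
    linear_combination h1
  have hc1 : c = 4 / 9 := by rw [hx8, hx10, hx12] at h1'; linarith
  have hs3cube : Real.sqrt 3 ^ 3 = 3 * Real.sqrt 3 := by
    have hcu : Real.sqrt 3 ^ 3 = Real.sqrt 3 ^ 2 * Real.sqrt 3 := by ring
    rw [hcu, hs3]
  have h2' : (9 / 32 - c * 81 / 512 * 3 / 8) * Real.sqrt 3 = 0 := by
    nlinarith [h2, hs3cube, hs3]
  rw [hc1] at h2'
  have hne : (9 / 32 - (4:ℝ) / 9 * 81 / 512 * 3 / 8) ≠ 0 := by norm_num
  exact (mul_ne_zero hne (ne_of_gt hs3pos)) h2'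
end
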